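/- arXiv:2003.10479 — 5 statements merged into one kernel-verified Lean document; each statement's English description precedes it below -/
import Mathlib

section
/- P-almost surely, π^{μ_N}(F) → π^μ(F) as N → ∞, where π^ν(F) := inf_{g∈𝒢} OCE^ν(F + g·G) for a probability measure ν on 𝒳. -/
open MeasureTheory ProbabilityTheory Filter Real Topology
open scoped ENNReal NNReal

/-- The empirical measure `μ_N = (1/N) ∑_{n<N} δ_{X_n(ω)}`. -/
noncomputable def empMeas {𝒳 Ω : Type*} [MeasurableSpace 𝒳] (X : ℕ → Ω → 𝒳) (N : ℕ) (ω : Ω) :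
    Measure 𝒳 :=
  (N : ℝ≥0∞)⁻¹ • ∑ n ∈ Finset.range N, Measure.dirac (X n ω)

/-- The hedged position `F + g·G`. -/
noncomputable def payoff {𝒳 : Type*} {e : ℕ} (F : 𝒳 → ℝ) (Gf : Fin e → 𝒳 → ℝ)
    (g : Fin e → ℝ) (x : 𝒳) : ℝ :=
  F x + ∑ i, g i * Gf i x

/-- The optimized certainty equivalent `OCE^ν(H) = inf_m ( ∫ l(H-m) dν + m )`. -/
noncomputable def OCE {𝒳 : Type*} [MeasurableSpace 𝒳] (l : ℝ → ℝ) (ν : Measure 𝒳)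
    (H : 𝒳 → ℝ) : ℝ :=
  ⨅ m : ℝ, ((∫ x, l (H x - m) ∂ν) + m)

private lemma conv_growth {l : ℝ → ℝ} (hl_conv : ConvexOn ℝ Set.univ l)
    (hl_subgrad : ∀ y, l 0 + y ≤ l y) {z y : ℝ} (hz : 0 ≤ z) (hzy : z ≤ y) :
    l z + (y - z) ≤ l y := by
  rcases eq_or_lt_of_le (hz.trans hzy) with hy0 | hy0
  · have hz0 : z = 0 := le_antisymm (hzy.trans hy0.symm.le) hz
    simp [hz0, ← hy0]
  · set t := z / y with ht
    have ht0 : 0 ≤ t := div_nonneg hz hy0.le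
    have ht1 : t ≤ 1 := by rw [ht, div_le_one hy0]; exact hzy
    have hty : t * y = z := by rw [ht]; exact div_mul_cancel₀ z hy0.ne'
    have hconv := hl_conv.2 (Set.mem_univ 0) (Set.mem_univ y) (by linarith : (0:ℝ) ≤ 1 - t) ht0
      (by ring)
    simp only [smul_eq_mul, mul_zero, zero_add, hty] at hconv
    have h1 : (1 - t) * y ≤ (1 - t) * (l y - l 0) :=
      mul_le_mul_of_nonneg_left (by linarith [hl_subgrad y]) (by linarith)
    nlinarith

private lemma conv_lip_aux {l : ℝ → ℝ} (hl_conv : ConvexOn ℝ Set.univ l)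
    (hl_nonneg : ∀ x, 0 ≤ l x) {K a b : ℝ} (hab : a ≤ b) (hb : b ≤ K) :
    l b - l a ≤ l (K + 1) * (b - a) := by
  have haK' : a ≤ K := hab.trans hb
  have hden : (0:ℝ) < K + 1 - a := by linarith
  set t := (b - a) / (K + 1 - a) with htdef
  have ht0 : 0 ≤ t := div_nonneg (by linarith) hden.le
  have ht1 : t ≤ 1 := by rw [htdef, div_le_one hden]; linarith
  have htb : (1 - t) * a + t * (K + 1) = b := by
    have h := div_mul_cancel₀ (b - a) hden.ne'; rw [← htdef] at h; linear_combination h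
  have hconv := hl_conv.2 (Set.mem_univ a) (Set.mem_univ (K + 1)) (by linarith : (0:ℝ) ≤ 1 - t)
    ht0 (by ring)
  simp only [smul_eq_mul, htb] at hconv
  have htle : t ≤ b - a := by
    rw [htdef, div_le_iff₀ hden]
    nlinarith
  nlinarith [hl_nonneg a, hl_nonneg (K + 1), mul_le_mul_of_nonneg_right htle
    (hl_nonneg (K + 1))]

private lemma conv_lip {l : ℝ → ℝ} (hl_mono : Monotone l) (hl_conv : ConvexOn ℝ Set.univ l)
    (hl_nonneg : ∀ x, 0 ≤ l x) {K a b : ℝ} (ha : |a| ≤ K) (hb : |b| ≤ K) :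
    |l a - l b| ≤ l (K + 1) * |a - b| := by
  rcases abs_le.1 ha with ⟨ha1, ha2⟩
  rcases abs_le.1 hb with ⟨hb1, hb2⟩
  rcases le_total a b with h | h
  · rw [abs_of_nonpos (by linarith [hl_mono h]), abs_of_nonpos (by linarith)]
    have := conv_lip_aux hl_conv hl_nonneg h hb2
    linarith
  · rw [abs_of_nonneg (by linarith [hl_mono h]), abs_of_nonneg (by linarith)]
    have := conv_lip_aux hl_conv hl_nonneg h ha2
    linarith

private lemma abs_ciInf_sub_ciInf {ι : Sort*} [Nonempty ι] {u v : ι → ℝ} {ε : ℝ}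
    (hu : BddBelow (Set.range u)) (hv : BddBelow (Set.range v))
    (h : ∀ i, |u i - v i| ≤ ε) : |(⨅ i, u i) - ⨅ i, v i| ≤ ε := by
  rw [abs_le]
  constructor
  · have : (⨅ i, v i) - ε ≤ ⨅ i, u i :=
      le_ciInf fun i => by have h1 := ciInf_le hv i; have h2 := abs_le.1 (h i); linarith
    linarith
  · have : (⨅ i, u i) - ε ≤ ⨅ i, v i :=
      le_ciInf fun i => by have h1 := ciInf_le hu i; have h2 := abs_le.1 (h i); linarith
    linarith

private lemma bdd_integrable {𝒳 : Type*} [MeasurableSpace 𝒳] {ν : Measure 𝒳} [IsFiniteMeasure ν]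
    {f : 𝒳 → ℝ} (hf : Measurable f) {C : ℝ} (hC : ∀ x, |f x| ≤ C) : Integrable f ν :=
  (integrable_const C).mono' hf.aestronglyMeasurable
    (ae_of_all _ fun x => by simpa [Real.norm_eq_abs] using hC x)

private lemma integral_empMeas {𝒳 Ω : Type*} [MeasurableSpace 𝒳] (X : ℕ → Ω → 𝒳) (N : ℕ) (ω : Ω)
    {f : 𝒳 → ℝ} (hf : Measurable f) {C : ℝ} (hC : ∀ x, |f x| ≤ C) :
    ∫ x, f x ∂(empMeas X N ω) = (N : ℝ)⁻¹ • ∑ n ∈ Finset.range N, f (X n ω) := by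
  rw [empMeas, integral_smul_measure,
    integral_finset_sum_measure (fun i _ => bdd_integrable hf hC)]
  simp [integral_dirac' f _ hf.stronglyMeasurable, ENNReal.toReal_inv]

private lemma empMeas_isProb {𝒳 Ω : Type*} [MeasurableSpace 𝒳] (X : ℕ → Ω → 𝒳) {N : ℕ}
    (hN : 1 ≤ N) (ω : Ω) : IsProbabilityMeasure (empMeas X N ω) := by
  constructor
  rw [empMeas, Measure.smul_apply, Measure.coe_finset_sum, Finset.sum_apply]
  simp only [Measure.dirac_apply_of_mem (Set.mem_univ _), Finset.sum_const,
    Finset.card_range, nsmul_eq_mul, mul_one, smul_eq_mul]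
  exact ENNReal.inv_mul_cancel (by simpa using Nat.one_le_iff_ne_zero.1 hN) (by simp)

private lemma emp_tendsto {𝒳 Ω : Type*} [MeasurableSpace 𝒳] [MeasurableSpace Ω]
    (P : Measure Ω) [IsProbabilityMeasure P] (μ : Measure 𝒳) [IsProbabilityMeasure μ]
    (X : ℕ → Ω → 𝒳) (hXmeas : ∀ n, Measurable (X n)) (hXlaw : ∀ n, Measure.map (X n) P = μ)
    (hXindep : iIndepFun X P)
    {f : 𝒳 → ℝ} (hf : Measurable f) {C : ℝ} (hC : ∀ x, |f x| ≤ C) :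
    ∀ᵐ ω ∂P, Tendsto (fun N => ∫ x, f x ∂(empMeas X N ω)) atTop (𝓝 (∫ x, f x ∂μ)) := by
  have hint : Integrable (fun ω => f (X 0 ω)) P :=
    bdd_integrable (hf.comp (hXmeas 0)) (fun ω => hC _)
  have hindep : Pairwise (Function.onFun (IndepFun · · P) fun n ω => f (X n ω)) :=
    fun i j hij => (hXindep.indepFun hij).comp hf hf
  have hident : ∀ i, IdentDistrib (fun ω => f (X i ω)) (fun ω => f (X 0 ω)) P P := by
    intro i
    refine ⟨(hf.comp (hXmeas i)).aemeasurable, (hf.comp (hXmeas 0)).aemeasurable, ?_⟩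
    show Measure.map (f ∘ X i) P = Measure.map (f ∘ X 0) P
    rw [← Measure.map_map hf (hXmeas i), ← Measure.map_map hf (hXmeas 0), hXlaw i, hXlaw 0]
  have hexp : P[fun ω => f (X 0 ω)] = ∫ x, f x ∂μ := by
    rw [← hXlaw 0, integral_map (hXmeas 0).aemeasurable hf.aestronglyMeasurable]
  filter_upwards [strong_law_ae _ hint hindep hident] with ω hω
  have heq : (fun N => ∫ x, f x ∂(empMeas X N ω))
      = fun n : ℕ => (n : ℝ)⁻¹ • ∑ i ∈ Finset.range n, f (X i ω) :=
    funext fun N => integral_empMeas X N ω hf hC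
  rw [heq, ← hexp]
  exact hω


/-- strong consistency, `π^{μ_N}(F) → π^μ(F)` almost surely, for the
OCE-based hedged risk `π^ν(F) = inf_{g∈𝒢} OCE^ν(F + g·G)`. -/
theorem oce_hedging_consistency
    {𝒳 Ω : Type*} [MeasurableSpace 𝒳] [MeasurableSpace Ω]
    (P : Measure Ω) [IsProbabilityMeasure P]
    (μ : Measure 𝒳) [IsProbabilityMeasure μ]
    (X : ℕ → Ω → 𝒳)
    (hXmeas : ∀ n, Measurable (X n))
    (hXlaw : ∀ n, Measure.map (X n) P = μ)
    (hXindep : iIndepFun X P)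
    {e : ℕ} (F : 𝒳 → ℝ) (Gf : Fin e → 𝒳 → ℝ)
    (hFmeas : Measurable F) (hFbdd : ∃ C, ∀ x, |F x| ≤ C)
    (hGmeas : ∀ i, Measurable (Gf i)) (hGbdd : ∀ i, ∃ C, ∀ x, |Gf i x| ≤ C)
    (𝒢 : Set (Fin e → ℝ)) (h𝒢 : Bornology.IsBounded 𝒢)
    (l : ℝ → ℝ) (hl_mono : Monotone l) (hl_conv : ConvexOn ℝ Set.univ l)
    (hl_nonneg : ∀ x, 0 ≤ l x) (hl_subgrad : ∀ y, l 0 + y ≤ l y) :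
    ∀ᵐ ω ∂P, Tendsto
      (fun N : ℕ => sInf ((fun g => OCE l (empMeas X N ω) (payoff F Gf g)) '' 𝒢))
      atTop (nhds (sInf ((fun g => OCE l μ (payoff F Gf g)) '' 𝒢))) := by
  classical
  obtain ⟨CF0, hCF0⟩ := hFbdd
  set CF : ℝ := max CF0 0 with hCFdef
  have hCF : ∀ x, |F x| ≤ CF := fun x => (hCF0 x).trans (le_max_left _ _)
  have hCFpos : 0 ≤ CF := le_max_right _ _
  choose CG0 hCG0 using hGbdd
  set CG : Fin e → ℝ := fun i => max (CG0 i) 0 with hCGdef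
  have hCG : ∀ i x, |Gf i x| ≤ CG i := fun i x => (hCG0 i x).trans (le_max_left _ _)
  have hCGpos : ∀ i, 0 ≤ CG i := fun i => le_max_right _ _
  set SG : ℝ := ∑ i, CG i with hSGdef
  have hSG0 : 0 ≤ SG := Finset.sum_nonneg fun i _ => hCGpos i
  obtain ⟨R0, hR0⟩ := isBounded_iff_forall_norm_le.1 h𝒢
  set R : ℝ := max R0 0 with hRdef
  have hR : ∀ g ∈ 𝒢, ∀ i, |g i| ≤ R := fun g hg i =>
    (norm_le_pi_norm g i).trans ((hR0 g hg).trans (le_max_left _ _))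
  have hR0' : 0 ≤ R := le_max_right _ _
  set C : ℝ := CF + R * SG with hCdef
  have hC0 : 0 ≤ C := by positivity
  have hPmeas : ∀ g, Measurable (payoff F Gf g) := fun g =>
    hFmeas.add (Finset.measurable_sum _ fun i _ => measurable_const.mul (hGmeas i))
  have hPb : ∀ g x, |payoff F Gf g x| ≤ CF + ∑ i, |g i| * CG i := by
    intro g x
    calc |payoff F Gf g x| ≤ |F x| + |∑ i, g i * Gf i x| := abs_add_le _ _
    _ ≤ CF + ∑ i, |g i| * CG i := by
        refine add_le_add (hCF x) ((Finset.abs_sum_le_sum_abs _ _).trans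
          (Finset.sum_le_sum fun i _ => ?_))
        rw [abs_mul]
        exact mul_le_mul_of_nonneg_left (hCG i x) (abs_nonneg _)
  have hPbC : ∀ g ∈ 𝒢, ∀ x, |payoff F Gf g x| ≤ C := by
    intro g hg x
    refine (hPb g x).trans ?_
    have h1 : ∑ i, |g i| * CG i ≤ ∑ i, R * CG i :=
      Finset.sum_le_sum fun i _ => mul_le_mul_of_nonneg_right (hR g hg i) (hCGpos i)
    rw [← Finset.mul_sum] at h1
    rw [hCdef]
    linarith
  set M : ℝ := max C (l C) with hMdef
  have hCM : C ≤ M := le_max_left _ _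
  have hlCM : l C ≤ M := le_max_right _ _
  have hM0 : 0 ≤ M := hC0.trans hCM
  have hlmeas : Measurable l := hl_mono.measurable
  have hfmeas : ∀ (g : Fin e → ℝ) (m : ℝ), Measurable fun x => l (payoff F Gf g x - m) :=
    fun g m => hlmeas.comp ((hPmeas g).sub measurable_const)
  have hfbdd : ∀ (g : Fin e → ℝ) (m : ℝ), ∀ x,
      |l (payoff F Gf g x - m)| ≤ l (CF + (∑ i, |g i| * CG i) + |m|) := by
    intro g m x
    rw [abs_of_nonneg (hl_nonneg _)]
    apply hl_mono
    have h1 := (abs_le.1 (hPb g x)).2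
    linarith [neg_abs_le m]
  have hInt : ∀ (ν : Measure 𝒳) [IsFiniteMeasure ν] (g : Fin e → ℝ) (m : ℝ),
      Integrable (fun x => l (payoff F Gf g x - m)) ν := fun ν _ g m =>
    bdd_integrable (hfmeas g m) (hfbdd g m)
  have hIntP : ∀ (ν : Measure 𝒳) [IsFiniteMeasure ν] (g : Fin e → ℝ),
      Integrable (payoff F Gf g) ν := fun ν _ g => bdd_integrable (hPmeas g) (hPb g)
  have hφlb : ∀ (ν : Measure 𝒳) [IsProbabilityMeasure ν], ∀ g ∈ 𝒢, ∀ m : ℝ,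
      -C ≤ (∫ x, l (payoff F Gf g x - m) ∂ν) + m := by
    intro ν hν g hg m
    have hpt : ∀ x, payoff F Gf g x - m ≤ l (payoff F Gf g x - m) := fun x => by
      linarith [hl_subgrad (payoff F Gf g x - m), hl_nonneg 0]
    have h1 : ∫ x, (payoff F Gf g x - m) ∂ν ≤ ∫ x, l (payoff F Gf g x - m) ∂ν :=
      integral_mono ((hIntP ν g).sub (integrable_const m)) (hInt ν g m) hpt
    rw [integral_sub (hIntP ν g) (integrable_const m), integral_const] at h1
    simp only [measure_univ, probReal_univ, ENNReal.toReal_one, one_smul, smul_eq_mul, one_mul] at h1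
    have h2 : -C ≤ ∫ x, payoff F Gf g x ∂ν := by
      have h3 := integral_mono (integrable_const (-C)) (hIntP ν g)
        (fun x => (abs_le.1 (hPbC g hg x)).1)
      simpa [measure_univ] using h3
    linarith
  haveI hIccNE : Nonempty (Set.Icc (-M) M) :=
    (Set.nonempty_Icc.2 (by linarith)).to_subtype
  have hOCE : ∀ (ν : Measure 𝒳) [IsProbabilityMeasure ν], ∀ g ∈ 𝒢,
      OCE l ν (payoff F Gf g)
        = ⨅ m : Set.Icc (-M) M, ((∫ x, l (payoff F Gf g x - (m:ℝ)) ∂ν) + (m:ℝ)) := by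
    intro ν hν g hg
    have hbdd : BddBelow (Set.range fun m : ℝ => (∫ x, l (payoff F Gf g x - m) ∂ν) + m) :=
      ⟨-C, by rintro y ⟨m, rfl⟩; exact hφlb ν g hg m⟩
    have hbdd2 : BddBelow (Set.range fun m : Set.Icc (-M) M =>
        (∫ x, l (payoff F Gf g x - (m:ℝ)) ∂ν) + (m:ℝ)) :=
      ⟨-C, by rintro y ⟨m, rfl⟩; exact hφlb ν g hg m⟩
    simp only [OCE]
    refine le_antisymm (le_ciInf fun m => ciInf_le hbdd (m:ℝ)) (le_ciInf fun m => ?_)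
    rcases le_total m (-M) with hm | hm
    · have hmem : (-C : ℝ) ∈ Set.Icc (-M) M := ⟨by linarith, by linarith⟩
      refine (ciInf_le hbdd2 ⟨-C, hmem⟩).trans ?_
      have hpt : ∀ x, l (payoff F Gf g x - (-C)) + (-m - C) ≤ l (payoff F Gf g x - m) := by
        intro x
        have h0 : 0 ≤ payoff F Gf g x + C := by linarith [(abs_le.1 (hPbC g hg x)).1]
        have h2 := conv_growth hl_conv hl_subgrad h0
          (show payoff F Gf g x + C ≤ payoff F Gf g x - m by linarith)
        have harg : payoff F Gf g x - (-C) = payoff F Gf g x + C := by ring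
        rw [harg]; linarith
      have h3 : ∫ x, (l (payoff F Gf g x - (-C)) + (-m - C)) ∂ν
          ≤ ∫ x, l (payoff F Gf g x - m) ∂ν :=
        integral_mono ((hInt ν g (-C)).add (integrable_const _)) (hInt ν g m) hpt
      rw [integral_add (hInt ν g (-C)) (integrable_const _), integral_const] at h3
      simp only [measure_univ, probReal_univ, ENNReal.toReal_one, one_smul, smul_eq_mul, one_mul] at h3
      show (∫ x, l (payoff F Gf g x - (-C)) ∂ν) + (-C) ≤ (∫ x, l (payoff F Gf g x - m) ∂ν) + m
      linarith
    · rcases le_total m M with hm2 | hm2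
      · exact ciInf_le hbdd2 ⟨m, hm, hm2⟩
      · have hmem : (0 : ℝ) ∈ Set.Icc (-M) M := ⟨by linarith, hM0⟩
        refine (ciInf_le hbdd2 ⟨0, hmem⟩).trans ?_
        have h4 : ∫ x, l (payoff F Gf g x - 0) ∂ν ≤ l C := by
          have h5 := integral_mono (hInt ν g 0) (integrable_const (l C))
            (fun x => hl_mono (by linarith [(abs_le.1 (hPbC g hg x)).2]))
          simpa [measure_univ] using h5
        have h6 : (0:ℝ) ≤ ∫ x, l (payoff F Gf g x - m) ∂ν :=
          integral_nonneg fun x => hl_nonneg _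
        show (∫ x, l (payoff F Gf g x - (0:ℝ)) ∂ν) + (0:ℝ) ≤ (∫ x, l (payoff F Gf g x - m) ∂ν) + m
        linarith [h4, h6]
  obtain ⟨T, hTc, hTd⟩ := TopologicalSpace.IsSeparable.of_separableSpace (𝒢 ×ˢ Set.Icc (-M) M)
  have hae : ∀ᵐ ω ∂P, ∀ q ∈ T, Tendsto
      (fun N => ∫ x, l (payoff F Gf q.1 x - q.2) ∂(empMeas X N ω)) atTop
      (𝓝 (∫ x, l (payoff F Gf q.1 x - q.2) ∂μ)) := by
    rw [ae_ball_iff hTc]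
    intro q hq
    exact emp_tendsto P μ X hXmeas hXlaw hXindep (hfmeas q.1 q.2) (hfbdd q.1 q.2)
  filter_upwards [hae] with ω hω
  have key : ∀ ε > (0:ℝ), ∀ᶠ N : ℕ in atTop,
      |sInf ((fun g => OCE l (empMeas X N ω) (payoff F Gf g)) '' 𝒢)
        - sInf ((fun g => OCE l μ (payoff F Gf g)) '' 𝒢)| ≤ ε := by
    intro ε hε
    set K' : ℝ := C + M + SG + 1 with hK'def
    set L : ℝ := l (K' + 1) with hLdef
    have hL0 : 0 ≤ L := hl_nonneg _
    set Lip : ℝ := L * (SG + 1) with hLipdef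
    have hLip0 : 0 ≤ Lip := mul_nonneg hL0 (by linarith)
    set δ : ℝ := min 1 (ε / (3 * (Lip + 1))) with hδdef
    have hδpos : 0 < δ := lt_min one_pos (div_pos hε (by linarith))
    have hδ1 : δ ≤ 1 := min_le_left _ _
    have hLipδ : Lip * δ ≤ ε / 3 := by
      have h1 : δ ≤ ε / (3 * (Lip + 1)) := min_le_right _ _
      calc Lip * δ ≤ Lip * (ε / (3 * (Lip + 1))) := mul_le_mul_of_nonneg_left h1 hLip0
      _ ≤ (Lip + 1) * (ε / (3 * (Lip + 1))) :=
          mul_le_mul_of_nonneg_right (by linarith) (by positivity)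
      _ = ε / 3 := by field_simp
    have hflip : ∀ p q : (Fin e → ℝ) × ℝ, p ∈ 𝒢 ×ˢ Set.Icc (-M) M → dist p q ≤ 1 → ∀ x,
        |l (payoff F Gf p.1 x - p.2) - l (payoff F Gf q.1 x - q.2)| ≤ Lip * dist p q := by
      intro p q hp hd x
      obtain ⟨hp1, hp2⟩ := hp
      have hdist0 : 0 ≤ dist p q := dist_nonneg
      have hd1 : dist p.1 q.1 ≤ dist p q := by rw [Prod.dist_eq]; exact le_max_left _ _
      have hd2 : dist p.2 q.2 ≤ dist p q := by rw [Prod.dist_eq]; exact le_max_right _ _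
      have hsum : ∑ i, (p.1 i - q.1 i) * Gf i x
          = ∑ i, p.1 i * Gf i x - ∑ i, q.1 i * Gf i x := by
        rw [← Finset.sum_sub_distrib]
        exact Finset.sum_congr rfl fun i _ => sub_mul _ _ _
      have heq : (payoff F Gf p.1 x - p.2) - (payoff F Gf q.1 x - q.2)
          = (∑ i, (p.1 i - q.1 i) * Gf i x) + (q.2 - p.2) := by
        simp only [payoff, hsum]; ring
      have hab : |(payoff F Gf p.1 x - p.2) - (payoff F Gf q.1 x - q.2)|
          ≤ (SG + 1) * dist p q := by
        rw [heq]
        calc |(∑ i, (p.1 i - q.1 i) * Gf i x) + (q.2 - p.2)|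
            ≤ |∑ i, (p.1 i - q.1 i) * Gf i x| + |q.2 - p.2| := abs_add_le _ _
        _ ≤ (∑ i, dist p q * CG i) + dist p q := by
            refine add_le_add ((Finset.abs_sum_le_sum_abs _ _).trans
              (Finset.sum_le_sum fun i _ => ?_)) ?_
            · rw [abs_mul]
              have hpi : |p.1 i - q.1 i| ≤ dist p q := by
                rw [← Real.dist_eq]
                exact (dist_le_pi_dist p.1 q.1 i).trans hd1
              exact mul_le_mul hpi (hCG i x) (abs_nonneg _) hdist0
            · rw [abs_sub_comm, ← Real.dist_eq]
              exact hd2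
        _ = (SG + 1) * dist p q := by rw [← Finset.mul_sum]; ring
      have hma : |p.2| ≤ M := abs_le.2 ⟨hp2.1, hp2.2⟩
      have ha : |payoff F Gf p.1 x - p.2| ≤ K' := by
        calc |payoff F Gf p.1 x - p.2| ≤ |payoff F Gf p.1 x| + |p.2| := abs_sub _ _
        _ ≤ C + M := add_le_add (hPbC p.1 hp1 x) hma
        _ ≤ K' := by rw [hK'def]; linarith
      have hb : |payoff F Gf q.1 x - q.2| ≤ K' := by
        have h7 : |payoff F Gf q.1 x - q.2| ≤ |payoff F Gf p.1 x - p.2|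
            + |(payoff F Gf p.1 x - p.2) - (payoff F Gf q.1 x - q.2)| := by
          have h7a := abs_sub_abs_le_abs_sub (payoff F Gf q.1 x - q.2) (payoff F Gf p.1 x - p.2)
          have h7b := abs_sub_comm (payoff F Gf q.1 x - q.2) (payoff F Gf p.1 x - p.2)
          linarith [abs_nonneg ((payoff F Gf p.1 x - p.2) - (payoff F Gf q.1 x - q.2))]
        have h8 : (SG + 1) * dist p q ≤ SG + 1 := by nlinarith
        calc |payoff F Gf q.1 x - q.2| ≤ (C + M) + (SG + 1) := by
              have h9 : |payoff F Gf p.1 x - p.2| ≤ C + M :=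
                (abs_sub _ _).trans (add_le_add (hPbC p.1 hp1 x) hma)
              linarith [hab.trans h8]
        _ ≤ K' := by rw [hK'def]; linarith
      calc |l (payoff F Gf p.1 x - p.2) - l (payoff F Gf q.1 x - q.2)|
          ≤ l (K' + 1) * |(payoff F Gf p.1 x - p.2) - (payoff F Gf q.1 x - q.2)| :=
            conv_lip hl_mono hl_conv hl_nonneg ha hb
      _ ≤ L * ((SG + 1) * dist p q) := by
          rw [← hLdef]
          exact mul_le_mul_of_nonneg_left hab hL0
      _ = Lip * dist p q := by rw [hLipdef]; ring
    have hKcomp : IsCompact (closure (𝒢 ×ˢ Set.Icc (-M) M)) :=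
      (h𝒢.prod (Metric.isBounded_Icc (-M) M)).isCompact_closure
    have hcov : closure (𝒢 ×ˢ Set.Icc (-M) M)
        ⊆ ⋃ q : T, Metric.ball (q : (Fin e → ℝ) × ℝ) δ := by
      intro p hp
      have hpT : p ∈ closure T := by
        have h10 := closure_mono hTd hp
        rwa [closure_closure] at h10
      obtain ⟨q, hqT, hq⟩ := Metric.mem_closure_iff.1 hpT δ hδpos
      exact Set.mem_iUnion.2 ⟨⟨q, hqT⟩, Metric.mem_ball.2 hq⟩
    obtain ⟨s, hs⟩ := hKcomp.elim_finite_subcover (fun q : T => Metric.ball (q : _) δ)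
      (fun q => Metric.isOpen_ball) hcov
    have hev1 : ∀ᶠ N : ℕ in atTop, ∀ q ∈ s,
        |(∫ x, l (payoff F Gf (q : (Fin e → ℝ) × ℝ).1 x - (q : (Fin e → ℝ) × ℝ).2)
            ∂(empMeas X N ω))
          - ∫ x, l (payoff F Gf (q : (Fin e → ℝ) × ℝ).1 x - (q : (Fin e → ℝ) × ℝ).2) ∂μ|
          ≤ ε / 3 := by
      rw [eventually_all_finset]
      intro q hq
      have h3 : 0 < ε / 3 := by linarith
      obtain ⟨N₀, hN₀⟩ := Metric.tendsto_atTop.1 (hω q q.2) (ε / 3) h3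
      rw [eventually_atTop]
      exact ⟨N₀, fun N hN => by have := hN₀ N hN; rw [Real.dist_eq] at this; linarith⟩
    filter_upwards [hev1, eventually_ge_atTop 1] with N hN hN1
    haveI := empMeas_isProb X hN1 ω
    have hclose : ∀ p ∈ 𝒢 ×ˢ Set.Icc (-M) M,
        |(∫ x, l (payoff F Gf p.1 x - p.2) ∂(empMeas X N ω))
          - ∫ x, l (payoff F Gf p.1 x - p.2) ∂μ| ≤ ε := by
      intro p hp
      obtain ⟨q, hqs, hpq⟩ := Set.mem_iUnion₂.1 (hs (subset_closure hp))
      have hdpq : dist p (q : (Fin e → ℝ) × ℝ) < δ := Metric.mem_ball.1 hpq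
      have hlip := hflip p q hp (hdpq.le.trans hδ1)
      have hbound : ∀ (ρ : Measure 𝒳), IsProbabilityMeasure ρ →
          |(∫ x, l (payoff F Gf p.1 x - p.2) ∂ρ)
            - ∫ x, l (payoff F Gf (q : (Fin e → ℝ) × ℝ).1 x
                - (q : (Fin e → ℝ) × ℝ).2) ∂ρ| ≤ ε / 3 := by
        intro ρ hρ
        rw [← integral_sub (hInt ρ p.1 p.2) (hInt ρ _ _)]
        have h11 := norm_integral_le_of_norm_le_const (μ := ρ)
          (C := Lip * dist p (q : (Fin e → ℝ) × ℝ))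
          (ae_of_all _ fun x => by rw [Real.norm_eq_abs]; exact hlip x)
        rw [probReal_univ, mul_one, Real.norm_eq_abs] at h11
        have h12 : Lip * dist p (q : (Fin e → ℝ) × ℝ) ≤ Lip * δ :=
          mul_le_mul_of_nonneg_left hdpq.le hLip0
        linarith
      have h1 := hbound (empMeas X N ω) inferInstance
      have h2 := hbound μ inferInstance
      have h3 := hN q hqs
      have h4 := abs_sub_le
        (∫ x, l (payoff F Gf p.1 x - p.2) ∂(empMeas X N ω))
        (∫ x, l (payoff F Gf (q : (Fin e → ℝ) × ℝ).1 x
          - (q : (Fin e → ℝ) × ℝ).2) ∂(empMeas X N ω))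
        (∫ x, l (payoff F Gf p.1 x - p.2) ∂μ)
      have h5 := abs_sub_le
        (∫ x, l (payoff F Gf (q : (Fin e → ℝ) × ℝ).1 x
          - (q : (Fin e → ℝ) × ℝ).2) ∂(empMeas X N ω))
        (∫ x, l (payoff F Gf (q : (Fin e → ℝ) × ℝ).1 x
          - (q : (Fin e → ℝ) × ℝ).2) ∂μ)
        (∫ x, l (payoff F Gf p.1 x - p.2) ∂μ)
      rw [abs_sub_comm (∫ x, l (payoff F Gf (q : (Fin e → ℝ) × ℝ).1 x
          - (q : (Fin e → ℝ) × ℝ).2) ∂μ)] at h5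
      linarith
    have hg2 : ∀ g ∈ 𝒢,
        |OCE l (empMeas X N ω) (payoff F Gf g) - OCE l μ (payoff F Gf g)| ≤ ε := by
      intro g hg
      rw [hOCE (empMeas X N ω) g hg, hOCE μ g hg]
      refine abs_ciInf_sub_ciInf
        ⟨-C, by rintro y ⟨m, rfl⟩; exact hφlb (empMeas X N ω) g hg m⟩
        ⟨-C, by rintro y ⟨m, rfl⟩; exact hφlb μ g hg m⟩ fun m => ?_
      have h13 := hclose (g, (m : ℝ)) ⟨hg, m.2⟩
      have h14 : ((∫ x, l (payoff F Gf g x - (m:ℝ)) ∂(empMeas X N ω)) + (m:ℝ))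
          - ((∫ x, l (payoff F Gf g x - (m:ℝ)) ∂μ) + (m:ℝ))
          = (∫ x, l (payoff F Gf g x - (m:ℝ)) ∂(empMeas X N ω))
            - ∫ x, l (payoff F Gf g x - (m:ℝ)) ∂μ := by ring
      rw [h14]
      exact h13
    rw [sInf_image', sInf_image']
    rcases 𝒢.eq_empty_or_nonempty with h𝒢e | h𝒢ne
    · haveI : IsEmpty 𝒢 := Set.isEmpty_coe_sort.2 h𝒢e
      simp [Real.iInf_of_isEmpty, hε.le]
    · haveI := h𝒢ne.to_subtype
      refine abs_ciInf_sub_ciInf ⟨-C, ?_⟩ ⟨-C, ?_⟩ fun g => hg2 g g.2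
      · rintro y ⟨g, rfl⟩
        exact le_ciInf fun m => hφlb (empMeas X N ω) g g.2 m
      · rintro y ⟨g, rfl⟩
        exact le_ciInf fun m => hφlb μ g g.2 m
  rw [Metric.tendsto_atTop]
  intro ε hε
  obtain ⟨N₀, hN₀⟩ := eventually_atTop.1 (key (ε / 2) (by linarith))
  exact ⟨N₀, fun n hn => by
    rw [Real.dist_eq]
    exact lt_of_le_of_lt (hN₀ n hn) (by linarith)⟩
end

section
/- Let p ∈ [1,∞), let l be a loss function whose right derivative satisfies l'(x) ≤ C₀(1 + |x|^{p−1}) for all x ∈ ℝ, let m₀ ∈ ℝ, set J := 1 + |F| + ∑_{i=1}^e |G_i|, and define the function class 𝓗 := { l(F + g·G − m) + m : g ∈ 𝒢, m ∈ [−m₀, m₀] }. Then there exists a constant C > 0 (depending on l, p, m₀, and the diameter of 𝒢) such that for every probability measure ν on 𝒳 with ‖J‖_{L^{2p}(ν)} < ∞ and every ε > 0, the covering number satisfies 𝒩(𝓗, ‖·‖_{L²(ν)}, ε) ≤ ( C · ‖J‖_{L^{2p}(ν)}^p / ε )^{e+1} ∨ 1; that is, there exists a finite set 𝓗̃ of measurable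 functions with cardinality at most this bound such that every H ∈ 𝓗 satisfies ‖H − H̃‖_{L²(ν)} ≤ ε for some H̃ ∈ 𝓗̃. -/
open MeasureTheory ProbabilityTheory Filter Real
open scoped ENNReal NNReal Topology

/-- Slope of a convex function is bounded by the right derivative. -/
lemma oce_aux_convex_slope_le_rightDeriv {l l' : ℝ → ℝ} (hconv : ConvexOn ℝ Set.univ l)
    (hd : ∀ x, HasDerivWithinAt l (l' x) (Set.Ici x) x) {a b : ℝ} (hab : a ≤ b) :
    l b - l a ≤ l' b * (b - a) := by
  rcases eq_or_lt_of_le hab with rfl | h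
  · simp
  have hslope : (l b - l a) / (b - a) ≤ l' b := by
    have htend : Tendsto (slope l b) (𝓝[>] b) (𝓝 (l' b)) := by
      have h2 := (hasDerivWithinAt_iff_tendsto_slope).mp (hd b)
      rwa [Set.Ici_sdiff_left] at h2
    refine ge_of_tendsto htend ?_
    filter_upwards [self_mem_nhdsWithin] with c hc
    have h3 := hconv.slope_mono_adjacent (Set.mem_univ a) (Set.mem_univ c) h hc
    rw [slope_def_field]
    exact h3
  have hba : (0:ℝ) < b - a := by linarith
  have := mul_le_mul_of_nonneg_right hslope hba.le
  calc l b - l a = (l b - l a)/(b-a) * (b-a) := by field_simp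
  _ ≤ l' b * (b - a) := this

/-- Lipschitz-type estimate for a monotone convex loss with polynomially growing
right derivative. -/
lemma oce_aux_loss_lipschitz {l l' : ℝ → ℝ} (hl_mono : Monotone l)
    (hconv : ConvexOn ℝ Set.univ l)
    (hd : ∀ x, HasDerivWithinAt l (l' x) (Set.Ici x) x)
    {p C₀ : ℝ} (hC₀ : 0 < C₀) (hg : ∀ x, l' x ≤ C₀ * (1 + |x| ^ (p-1)))
    (a b : ℝ) : |l a - l b| ≤ C₀ * (1 + |a|^(p-1) + |b|^(p-1)) * |a - b| := by
  have key : ∀ u v : ℝ, u ≤ v → |l u - l v| ≤ C₀ * (1 + |u|^(p-1) + |v|^(p-1)) * |u - v| := by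
    intro u v huv
    have h0 : l u ≤ l v := hl_mono huv
    have h1 : l v - l u ≤ l' v * (v - u) := oce_aux_convex_slope_le_rightDeriv hconv hd huv
    have h2 : l' v ≤ C₀ * (1 + |v|^(p-1)) := hg v
    have h3 : l' v * (v - u) ≤ C₀ * (1 + |v|^(p-1)) * (v - u) :=
      mul_le_mul_of_nonneg_right h2 (by linarith)
    have hunn : (0:ℝ) ≤ |u|^(p-1) := Real.rpow_nonneg (abs_nonneg u) _
    have hvnn : (0:ℝ) ≤ |v|^(p-1) := Real.rpow_nonneg (abs_nonneg v) _
    have habs1 : |l u - l v| = l v - l u := by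
      rw [abs_sub_comm]; exact abs_of_nonneg (by linarith)
    have habs2 : |u - v| = v - u := by
      rw [abs_sub_comm]; exact abs_of_nonneg (by linarith)
    rw [habs1, habs2]
    have h4 : C₀ * (1 + |v|^(p-1)) * (v - u) ≤ C₀ * (1 + |u|^(p-1) + |v|^(p-1)) * (v - u) :=
      mul_le_mul_of_nonneg_right (by nlinarith) (by linarith)
    linarith
  rcases le_total a b with h | h
  · exact key a b h
  · have := key b a h
    rwa [abs_sub_comm (l b), abs_sub_comm b, show 1 + |b|^(p-1) + |a|^(p-1)
      = 1 + |a|^(p-1) + |b|^(p-1) by ring] at this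

/-- One-dimensional net of an interval with explicit cardinality bound. -/
lemma oce_aux_net1d (L δ : ℝ) (hL : 0 ≤ L) (hδ : 0 < δ) :
    ∃ s : Finset ℝ, ((s.card : ℝ) ≤ max (2 * L / δ) 1) ∧ (∀ t' ∈ s, |t'| ≤ L) ∧
      ∀ t ∈ Set.Icc (-L) L, ∃ t' ∈ s, |t - t'| ≤ δ := by
  rcases eq_or_lt_of_le hL with rfl | hL
  · refine ⟨{0}, by simp, by simp, ?_⟩
    intro t ht
    simp only [neg_zero, Set.Icc_self, Set.mem_singleton_iff] at ht
    exact ⟨0, Finset.mem_singleton_self 0, by simp [ht, hδ.le]⟩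
  set N : ℕ := max ⌈L / δ⌉₊ 1 with hN
  have hN1 : 1 ≤ N := le_max_right _ _
  have hNpos : (0:ℝ) < (N:ℝ) := by exact_mod_cast hN1
  have h1 : L / δ ≤ (N : ℝ) := le_trans (Nat.le_ceil _) (by exact_mod_cast le_max_left _ _)
  have hLN : L / N ≤ δ := by
    rw [div_le_iff₀ hδ] at h1
    rw [div_le_iff₀ hNpos]
    linarith
  have hNL : (N:ℝ) * (L/N) = L := by field_simp
  have hLNpos : 0 < L / N := by positivity
  refine ⟨(Finset.range N).image (fun k : ℕ => -L + (2*(k:ℝ)+1) * (L/N)), ?_, ?_, ?_⟩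
  · have hcard : ((Finset.range N).image
        (fun k : ℕ => -L + (2*(k:ℝ)+1) * (L/N))).card ≤ N :=
      Finset.card_image_le.trans (by simp)
    refine le_trans (show ((Finset.image _ _).card:ℝ) ≤ (N:ℝ) from Nat.cast_le.mpr hcard) ?_
    rcases le_or_gt (⌈L / δ⌉₊) 1 with h2 | h2
    · have hNe : N = 1 := by omega
      rw [hNe]; simp
    · have hNe : N = ⌈L / δ⌉₊ := by omega
      have h3 : ((N:ℝ)) < L/δ + 1 := by
        rw [hNe]; exact Nat.ceil_lt_add_one (by positivity)
      have h4 : (2:ℝ) ≤ (N:ℝ) := by exact_mod_cast (by omega : 2 ≤ N)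
      have h5 : (N:ℝ) ≤ 2 * L / δ := by
        have : (1:ℝ) ≤ L/δ := by linarith
        rw [mul_div_assoc]; linarith
      exact le_trans h5 (le_max_left _ _)
  · intro t' ht'
    simp only [Finset.mem_image, Finset.mem_range] at ht'
    obtain ⟨k, hk, rfl⟩ := ht'
    have hk' : (k:ℝ) ≤ (N:ℝ) - 1 := by
      have : (k:ℝ) + 1 ≤ (N:ℝ) := by exact_mod_cast hk
      linarith
    have hk0 : (0:ℝ) ≤ (k:ℝ) := Nat.cast_nonneg k
    rw [abs_le]
    constructor
    · nlinarith
    · nlinarith [mul_le_mul_of_nonneg_right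
        (show 2*(k:ℝ)+1 ≤ 2*(N:ℝ)-1 by linarith) hLNpos.le]
  · intro t ht
    obtain ⟨ht1, ht2⟩ := ht
    set u : ℝ := (t + L) * N / (2 * L) with hu
    have hu0 : 0 ≤ u := by
      apply div_nonneg _ (by linarith)
      apply mul_nonneg (by linarith) hNpos.le
    have huN : u ≤ (N:ℝ) := by
      rw [hu, div_le_iff₀ (by linarith : (0:ℝ) < 2*L)]
      nlinarith
    set k : ℕ := min ⌊u⌋₊ (N - 1) with hk
    have hkN : k < N := by omega
    refine ⟨-L + (2*(k:ℝ)+1) * (L/N),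
      Finset.mem_image_of_mem _ (Finset.mem_range.mpr hkN), ?_⟩
    have hku : (k:ℝ) ≤ u :=
      le_trans (by exact_mod_cast min_le_left ⌊u⌋₊ (N-1)) (Nat.floor_le hu0)
    have huk : u ≤ (k:ℝ) + 1 := by
      rcases le_or_gt (⌊u⌋₊) (N-1) with hle | hlt
      · have he : k = ⌊u⌋₊ := by omega
        rw [he]
        exact le_of_lt (Nat.lt_floor_add_one u)
      · have he : (k:ℝ) + 1 = (N:ℝ) := by
          have hkeq : k = N - 1 := by omega
          rw [hkeq, Nat.cast_sub hN1]; ring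
        rw [he]; exact huN
    have htL : t + L = u * (2*(L/N)) := by
      rw [hu]; field_simp
    have e1 : (k:ℝ) * (2*(L/N)) ≤ u * (2*(L/N)) :=
      mul_le_mul_of_nonneg_right hku (by linarith)
    have e2 : u * (2*(L/N)) ≤ ((k:ℝ)+1) * (2*(L/N)) :=
      mul_le_mul_of_nonneg_right huk (by linarith)
    rw [abs_le]
    constructor <;> [nlinarith; nlinarith]

/-- Pointwise Lipschitz estimate for the OCE class. -/
lemma oce_aux_pointwise_est {𝒳 : Type*}
    {e : ℕ} (F : 𝒳 → ℝ) (Gf : Fin e → 𝒳 → ℝ)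
    (p : ℝ) (hp : 1 ≤ p)
    (l : ℝ → ℝ)
    (C₀ : ℝ) (hC₀ : 0 < C₀)
    (hlip : ∀ a b : ℝ, |l a - l b| ≤ C₀ * (1 + |a|^(p-1) + |b|^(p-1)) * |a - b|)
    (J : 𝒳 → ℝ) (hJ : J = fun x => 1 + |F x| + ∑ i, |Gf i x|)
    (L : ℝ) (hL1 : 1 ≤ L)
    (K : ℝ) (hK : K = C₀ * (1 + 2 * L^(p-1)) + 1)
    (δ : ℝ) (hδ : 0 ≤ δ)
    (g g' : Fin e → ℝ) (m m' : ℝ)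
    (hgL : ∀ i, |g i| ≤ L) (hg'L : ∀ i, |g' i| ≤ L) (hmL : |m| ≤ L) (hm'L : |m'| ≤ L)
    (hgd : ∀ i, |g i - g' i| ≤ δ) (hmd : |m - m'| ≤ δ) (x : 𝒳) :
    |(l (payoff F Gf g x - m) + m) - (l (payoff F Gf g' x - m') + m')|
      ≤ K * δ * (J x) ^ p := by
  have hp0 : (0:ℝ) ≤ p - 1 := by linarith
  have hsum_nonneg : (0:ℝ) ≤ ∑ i, |Gf i x| := Finset.sum_nonneg fun i _ => abs_nonneg _
  have hJ1 : 1 ≤ J x := by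
    rw [hJ]
    simp only
    nlinarith [abs_nonneg (F x)]
  have hJpos : 0 < J x := by linarith
  set u := payoff F Gf g x - m with husdef
  set v := payoff F Gf g' x - m' with hvsdef
  have habs_bound : ∀ (w : Fin e → ℝ) (c : ℝ), (∀ i, |w i| ≤ L) → |c| ≤ L →
      |payoff F Gf w x - c| ≤ L * J x := by
    intro w c hw hc
    have h1 : |∑ i, w i * Gf i x| ≤ L * ∑ i, |Gf i x| := by
      calc |∑ i, w i * Gf i x| ≤ ∑ i, |w i * Gf i x| := Finset.abs_sum_le_sum_abs _ _
      _ ≤ ∑ i, L * |Gf i x| := by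
          refine Finset.sum_le_sum fun i _ => ?_
          rw [abs_mul]
          exact mul_le_mul_of_nonneg_right (hw i) (abs_nonneg _)
      _ = L * ∑ i, |Gf i x| := by rw [Finset.mul_sum]
    have h2 : |payoff F Gf w x - c| ≤ |F x| + |∑ i, w i * Gf i x| + |c| := by
      rw [payoff]
      calc |F x + ∑ i, w i * Gf i x - c| ≤ |F x + ∑ i, w i * Gf i x| + |c| := abs_sub _ _
      _ ≤ |F x| + |∑ i, w i * Gf i x| + |c| := by gcongr; exact abs_add_le _ _
    rw [hJ]
    simp only
    nlinarith [abs_nonneg (F x)]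
  have hu : |u| ≤ L * J x := habs_bound g m hgL hmL
  have hv : |v| ≤ L * J x := habs_bound g' m' hg'L hm'L
  have huv : |u - v| ≤ δ * J x := by
    have h1 : u - v = (∑ i, (g i - g' i) * Gf i x) - (m - m') := by
      rw [husdef, hvsdef, payoff, payoff]
      rw [show (∑ i, (g i - g' i) * Gf i x) = (∑ i, g i * Gf i x) - ∑ i, g' i * Gf i x by
        rw [← Finset.sum_sub_distrib]; exact Finset.sum_congr rfl fun i _ => by ring]
      ring
    have h2 : |∑ i, (g i - g' i) * Gf i x| ≤ δ * ∑ i, |Gf i x| := by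
      calc |∑ i, (g i - g' i) * Gf i x| ≤ ∑ i, |(g i - g' i) * Gf i x| :=
            Finset.abs_sum_le_sum_abs _ _
      _ ≤ ∑ i, δ * |Gf i x| := by
          refine Finset.sum_le_sum fun i _ => ?_
          rw [abs_mul]
          exact mul_le_mul_of_nonneg_right (hgd i) (abs_nonneg _)
      _ = δ * ∑ i, |Gf i x| := by rw [Finset.mul_sum]
    calc |u - v| ≤ |∑ i, (g i - g' i) * Gf i x| + |m - m'| := by
          rw [h1]; exact abs_sub _ _
    _ ≤ δ * ∑ i, |Gf i x| + δ := by linarith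
    _ ≤ δ * J x := by rw [hJ]; simp only; nlinarith [abs_nonneg (F x)]
  have hLp : (0:ℝ) ≤ L ^ (p-1) := Real.rpow_nonneg (by linarith) _
  have hJp1 : (1:ℝ) ≤ (J x) ^ (p-1) := by
    calc (1:ℝ) = 1 ^ (p-1) := (Real.one_rpow _).symm
    _ ≤ (J x) ^ (p-1) := Real.rpow_le_rpow (by norm_num) hJ1 hp0
  have hrpow : ∀ w : ℝ, |w| ≤ L * J x → |w|^(p-1) ≤ L^(p-1) * (J x)^(p-1) := by
    intro w hw
    calc |w|^(p-1) ≤ (L * J x)^(p-1) := Real.rpow_le_rpow (abs_nonneg _) hw hp0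
    _ = L^(p-1) * (J x)^(p-1) := Real.mul_rpow (by linarith) hJpos.le
  have hurp := hrpow u hu
  have hvrp := hrpow v hv
  have hJmul : (J x)^(p-1) * J x = (J x)^p := by
    rw [← Real.rpow_add_one (ne_of_gt hJpos)]
    ring_nf
  have hJp : (1:ℝ) ≤ (J x)^p := by nlinarith
  have hlipuv := hlip u v
  have hfac : 1 + |u|^(p-1) + |v|^(p-1) ≤ (1 + 2 * L^(p-1)) * (J x)^(p-1) := by
    nlinarith
  have h5 : |l u - l v| ≤ C₀ * ((1 + 2 * L^(p-1)) * (J x)^(p-1)) * (δ * J x) := by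
    calc |l u - l v| ≤ C₀ * (1 + |u|^(p-1) + |v|^(p-1)) * |u - v| := hlipuv
    _ ≤ C₀ * ((1 + 2 * L^(p-1)) * (J x)^(p-1)) * (δ * J x) := by
        apply mul_le_mul
        · exact mul_le_mul_of_nonneg_left hfac hC₀.le
        · exact huv
        · exact abs_nonneg _
        · positivity
  have h6 : C₀ * ((1 + 2 * L^(p-1)) * (J x)^(p-1)) * (δ * J x)
      = C₀ * (1 + 2 * L^(p-1)) * δ * (J x)^p := by
    rw [← hJmul]; ring
  calc |(l u + m) - (l v + m')| ≤ |l u - l v| + |m - m'| := by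
        have h7 : (l u + m) - (l v + m') = (l u - l v) + (m - m') := by ring
        rw [h7]; exact abs_add_le _ _
  _ ≤ C₀ * (1 + 2 * L^(p-1)) * δ * (J x)^p + δ := by rw [← h6]; linarith
  _ ≤ K * δ * (J x)^p := by rw [hK]; nlinarith

lemma oce_aux_elp_comp {𝒳 : Type*} [MeasurableSpace 𝒳] (ν : Measure 𝒳)
    (J : 𝒳 → ℝ) (hJnn : ∀ x, 0 ≤ J x) (p : ℝ) (hp : 1 ≤ p) (c : ℝ) (hc : 0 ≤ c) :
    eLpNorm (fun y => c * (J y) ^ p) 2 ν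
      = ENNReal.ofReal c * eLpNorm J (ENNReal.ofReal (2*p)) ν ^ p := by
  have hp0 : (0:ℝ) < p := by linarith
  have h1 : (fun y => c * (J y) ^ p) = c • (fun y => ‖J y‖ ^ p) := by
    funext y
    simp only [Pi.smul_apply, smul_eq_mul, Real.norm_eq_abs, abs_of_nonneg (hJnn y)]
  rw [h1, eLpNorm_const_smul, eLpNorm_norm_rpow J hp0]
  rw [show (2 : ℝ≥0∞) * ENNReal.ofReal p = ENNReal.ofReal (2*p) by
    rw [← ENNReal.ofReal_ofNat, ← ENNReal.ofReal_mul (by norm_num)]]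
  congr 1
  exact (Real.enorm_eq_ofReal hc)

lemma oce_aux_one_le_elp {𝒳 : Type*} [MeasurableSpace 𝒳] (ν : Measure 𝒳)
    [IsProbabilityMeasure ν]
    (J : 𝒳 → ℝ) (hJ1 : ∀ x, 1 ≤ J x) (q : ℝ) (hq : 0 < q) :
    1 ≤ eLpNorm J (ENNReal.ofReal q) ν := by
  have h0 : ENNReal.ofReal q ≠ 0 := by
    simp [ENNReal.ofReal_eq_zero]; linarith
  have hconst : eLpNorm (fun _ : 𝒳 => (1:ℝ)) (ENNReal.ofReal q) ν = 1 := by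
    rw [eLpNorm_const (1:ℝ) h0 (IsProbabilityMeasure.ne_zero ν)]
    simp
  calc (1:ℝ≥0∞) = eLpNorm (fun _ : 𝒳 => (1:ℝ)) (ENNReal.ofReal q) ν := hconst.symm
  _ ≤ eLpNorm J (ENNReal.ofReal q) ν := by
      apply eLpNorm_mono
      intro x
      simp only [norm_one, Real.norm_eq_abs]
      rw [abs_of_nonneg (by linarith [hJ1 x])]
      exact hJ1 x

/-- covering-number bound
`𝒩(𝓗, ‖·‖_{L²(ν)}, ε) ≤ (C‖J‖_{L^{2p}(ν)}^p/ε)^{e+1} ∨ 1` for the class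
`𝓗 = { l(F + g·G − m) + m : g ∈ 𝒢, |m| ≤ m₀ }`, spelled out via the existence of a
finite set of measurable functions which ε-covers `𝓗` in `L²(ν)`. -/
theorem oce_class_covering_numbers
    {𝒳 : Type*} [MeasurableSpace 𝒳]
    {e : ℕ} (F : 𝒳 → ℝ) (Gf : Fin e → 𝒳 → ℝ)
    (hFmeas : Measurable F) (hGmeas : ∀ i, Measurable (Gf i))
    (𝒢 : Set (Fin e → ℝ)) (h𝒢 : Bornology.IsBounded 𝒢)
    (p : ℝ) (hp : 1 ≤ p)
    (l : ℝ → ℝ) (hl_mono : Monotone l) (hl_conv : ConvexOn ℝ Set.univ l)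
    (hl_nonneg : ∀ x, 0 ≤ l x) (hl_subgrad : ∀ y, l 0 + y ≤ l y)
    -- the right derivative l' of l has polynomial growth of degree p-1:
    (l' : ℝ → ℝ) (hl' : ∀ x, HasDerivWithinAt l (l' x) (Set.Ici x) x)
    (C₀ : ℝ) (hC₀ : 0 < C₀) (hl'_growth : ∀ x, l' x ≤ C₀ * (1 + |x| ^ (p - 1)))
    (m₀ : ℝ)
    -- J = 1 + |F| + ∑ᵢ |Gᵢ|:
    (J : 𝒳 → ℝ) (hJ : J = fun x => 1 + |F x| + ∑ i, |Gf i x|) :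
    ∃ C > 0, ∀ (ν : Measure 𝒳), IsProbabilityMeasure ν →
      eLpNorm J (ENNReal.ofReal (2 * p)) ν < ⊤ → ∀ ε : ℝ, 0 < ε →
        ∃ T : Finset (𝒳 → ℝ),
          (∀ h ∈ T, Measurable h) ∧
          (T.card : ℝ) ≤
            max ((C * (eLpNorm J (ENNReal.ofReal (2 * p)) ν).toReal ^ p / ε) ^ (e + 1)) 1 ∧
          ∀ g ∈ 𝒢, ∀ m ∈ Set.Icc (-m₀) m₀, ∃ h ∈ T,
            eLpNorm (fun x => (l (payoff F Gf g x - m) + m) - h x) 2 ν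
              ≤ ENNReal.ofReal ε := by
  classical
  have hlip := oce_aux_loss_lipschitz hl_mono hl_conv hl' hC₀ hl'_growth
  obtain ⟨R, hR⟩ := (Metric.isBounded_iff_subset_closedBall 0).mp h𝒢
  set L : ℝ := max R 0 + |m₀| + 1 with hLdef
  have hL1 : 1 ≤ L := by
    linarith [hLdef, le_max_right R 0, abs_nonneg m₀]
  have hLpos : 0 < L := by linarith
  set K : ℝ := C₀ * (1 + 2 * L^(p-1)) + 1 with hKdef
  have hLp : (0:ℝ) ≤ L ^ (p-1) := Real.rpow_nonneg hLpos.le _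
  have hKpos : 0 < K := by rw [hKdef]; nlinarith
  refine ⟨2 * L * K, by positivity, ?_⟩
  intro ν hν hfin ε hε
  set a := eLpNorm J (ENNReal.ofReal (2 * p)) ν with hadef
  set x := a.toReal with hxdef
  have hJ1all : ∀ y, 1 ≤ J y := by
    intro y
    rw [hJ]
    have : (0:ℝ) ≤ ∑ i, |Gf i y| := Finset.sum_nonneg fun i _ => abs_nonneg _
    simp only
    nlinarith [abs_nonneg (F y)]
  have hJnn : ∀ y, 0 ≤ J y := fun y => le_trans zero_le_one (hJ1all y)
  have ha1 : 1 ≤ a := oce_aux_one_le_elp ν J hJ1all (2*p) (by linarith)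
  have hx1 : 1 ≤ x := by
    have h := ENNReal.toReal_mono hfin.ne ha1
    rwa [ENNReal.toReal_one] at h
  have hxppos : 0 < x ^ p := Real.rpow_pos_of_pos (by linarith) _
  have hxp1 : 1 ≤ x ^ p := by
    calc (1:ℝ) = 1 ^ p := (Real.one_rpow _).symm
    _ ≤ x ^ p := Real.rpow_le_rpow (by norm_num) hx1 (by linarith)
  set δ : ℝ := ε / (K * x ^ p) with hδdef
  have hδpos : 0 < δ := by rw [hδdef]; positivity
  obtain ⟨s, hscard, hsbound, hscover⟩ := oce_aux_net1d L δ hLpos.le hδpos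
  refine ⟨((Fintype.piFinset fun _ : Fin e => s) ×ˢ s).image
    (fun q' => fun y => l (payoff F Gf q'.1 y - q'.2) + q'.2), ?_, ?_, ?_⟩
  · -- measurability
    intro h hh
    simp only [Finset.mem_image] at hh
    obtain ⟨q', _, rfl⟩ := hh
    have hpay : Measurable (payoff F Gf q'.1) := by
      unfold payoff
      exact hFmeas.add (Finset.measurable_sum _ fun i _ => (measurable_const.mul (hGmeas i)))
    exact (hl_mono.measurable.comp (hpay.sub measurable_const)).add measurable_const
  · -- cardinality bound
    have hcard1 : (((Fintype.piFinset fun _ : Fin e => s) ×ˢ s).image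
        (fun q' : (Fin e → ℝ) × ℝ => fun y => l (payoff F Gf q'.1 y - q'.2) + q'.2)).card
        ≤ s.card ^ (e + 1) := by
      refine Finset.card_image_le.trans ?_
      rw [Finset.card_product, Fintype.card_piFinset_const, pow_succ]
    have hcard2 : ((((Fintype.piFinset fun _ : Fin e => s) ×ˢ s).image
        (fun q' : (Fin e → ℝ) × ℝ => fun y => l (payoff F Gf q'.1 y - q'.2) + q'.2)).card : ℝ)
        ≤ ((s.card : ℝ)) ^ (e + 1) := by
      calc _ ≤ ((s.card ^ (e+1) : ℕ) : ℝ) := Nat.cast_le.mpr hcard1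
      _ = ((s.card : ℝ)) ^ (e + 1) := by push_cast; ring
    refine hcard2.trans ?_
    have hratio : 2 * L / δ = 2 * L * K * x ^ p / ε := by
      rw [hδdef]
      field_simp
    rcases le_total (2 * L / δ) 1 with hc | hc
    · have hs1 : (s.card : ℝ) ≤ 1 := hscard.trans (by rw [max_eq_right hc])
      have : ((s.card : ℝ)) ^ (e + 1) ≤ 1 :=
        pow_le_one₀ (Nat.cast_nonneg _) hs1
      exact this.trans (le_max_right _ _)
    · have hs1 : (s.card : ℝ) ≤ 2 * L / δ := hscard.trans (by rw [max_eq_left hc])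
      have h2 : ((s.card : ℝ)) ^ (e + 1) ≤ (2 * L / δ) ^ (e + 1) :=
        pow_le_pow_left₀ (Nat.cast_nonneg _) hs1 _
      exact h2.trans (le_trans (le_of_eq (by rw [hratio])) (le_max_left _ _))
  · -- covering property
    intro g hg m hm
    have hgL : ∀ i, |g i| ≤ L := by
      intro i
      have h1 : ‖g i‖ ≤ ‖g‖ := norm_le_pi_norm g i
      have h2 : ‖g‖ ≤ R := by
        have := hR hg
        rwa [Metric.mem_closedBall, dist_zero_right] at this
      have h3 : R ≤ max R 0 := le_max_left _ _
      rw [Real.norm_eq_abs] at h1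
      linarith [hLdef, abs_nonneg m₀]
    have hmabs : |m| ≤ L := by
      obtain ⟨hm1, hm2⟩ := hm
      have : |m| ≤ m₀ := abs_le.mpr ⟨by linarith, hm2⟩
      have := le_abs_self m₀
      linarith [hLdef, le_max_right R 0]
    have hchoice : ∀ i : Fin e, ∃ t' ∈ s, |g i - t'| ≤ δ := by
      intro i
      exact hscover (g i) (abs_le.mp (hgL i))
    choose g' hg's hg'd using hchoice
    obtain ⟨m', hm's, hm'd⟩ := hscover m (abs_le.mp hmabs)
    refine ⟨fun y => l (payoff F Gf g' y - m') + m', ?_, ?_⟩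
    · have hmem : ((g', m') : (Fin e → ℝ) × ℝ) ∈ (Fintype.piFinset fun _ : Fin e => s) ×ˢ s :=
        Finset.mem_product.mpr ⟨Fintype.mem_piFinset.mpr hg's, hm's⟩
      exact Finset.mem_image_of_mem _ hmem
    · have hpt : ∀ y, ‖(l (payoff F Gf g y - m) + m) - (l (payoff F Gf g' y - m') + m')‖
          ≤ K * δ * (J y) ^ p := by
        intro y
        rw [Real.norm_eq_abs]
        exact oce_aux_pointwise_est F Gf p hp l C₀ hC₀ hlip J hJ L hL1 K rfl δ hδpos.le
          g g' m m' hgL (fun i => hsbound _ (hg's i)) hmabs (hsbound _ hm's)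
          hg'd hm'd y
      calc eLpNorm (fun y => (l (payoff F Gf g y - m) + m)
            - (l (payoff F Gf g' y - m') + m')) 2 ν
          ≤ eLpNorm (fun y => K * δ * (J y) ^ p) 2 ν := eLpNorm_mono_real hpt
      _ = ENNReal.ofReal (K * δ) * a ^ p :=
          oce_aux_elp_comp ν J hJnn p hp (K * δ) (by positivity)
      _ = ENNReal.ofReal (K * δ) * ENNReal.ofReal (x ^ p) := by
          congr 1
          conv_lhs => rw [← ENNReal.ofReal_toReal hfin.ne]
          rw [← ENNReal.ofReal_rpow_of_nonneg ENNReal.toReal_nonneg (by linarith : (0:ℝ) ≤ p)]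
      _ = ENNReal.ofReal (K * δ * x ^ p) := by
          rw [← ENNReal.ofReal_mul (by positivity)]
      _ = ENNReal.ofReal ε := by
          congr 1
          rw [hδdef]
          field_simp
end

section
/- Let p ∈ (1,∞) and let X be a real random variable with ‖X‖_{L^p} < ∞. Then for every u ∈ [0,1), |AVaR_u(X)| ≤ ‖X‖_{L^p} / (1−u)^{1/p}. -/
open MeasureTheory ProbabilityTheory Filter Real
open scoped ENNReal NNReal

/-- The average value at risk `AVaR_u(X) = inf_m E[(X−m)⁺/(1−u) + m]`. -/
noncomputable def AVaR {Ω : Type*} [MeasurableSpace Ω] (P : Measure Ω) (u : ℝ)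
    (X : Ω → ℝ) : ℝ :=
  ⨅ m : ℝ, ∫ ω, (max (X ω - m) 0 / (1 - u) + m) ∂P

/-!
For `p ≥ 1` and `B > 0`, Bernoulli's inequality gives `(x - B (1 - 1/p))⁺ ≤ (B/p) (|x|/B)^p`.
Testing the infimum defining `AVaR_u(X)` at `m = B (1 - 1/p)` therefore bounds it by `B` as soon
as `E|X|^p ≤ (1 - u) B^p`, and letting `B` decrease to `‖X‖_p / (1 - u)^(1/p)` gives the upper
bound. The lower bound is `AVaR_u(X) ≥ E X ≥ -‖X‖_1 ≥ -‖X‖_p`, the last step by Jensen.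
-/

open Set

lemma max_sub_mul_one_sub_inv_le {p B : ℝ} (hp : 1 ≤ p) (hB : 0 < B) (x : ℝ) :
    max (x - B * (1 - 1 / p)) 0 ≤ B / p * (|x| / B) ^ p := by
  have hp₀ : 0 < p := by linarith
  have ht : 0 ≤ |x| / B := by positivity
  have hbern := one_add_mul_self_le_rpow_one_add (s := |x| / B - 1) (by linarith) hp
  rw [add_sub_cancel] at hbern
  refine max_le ?_ (by positivity)
  calc x - B * (1 - 1 / p) ≤ B / p * (1 + p * (|x| / B - 1)) := by
        field_simp
        linarith [mul_le_mul_of_nonneg_left (le_abs_self x) hp₀.le]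
    _ ≤ B / p * (|x| / B) ^ p := by gcongr

section
variable {Ω : Type*} [MeasurableSpace Ω] {P : Measure Ω} {X : Ω → ℝ} {u p : ℝ}

lemma integral_abs_le_integral_abs_rpow_rpow [IsProbabilityMeasure P] (hp : 1 ≤ p)
    (hX : Integrable X P) (hXp : Integrable (fun ω => |X ω| ^ p) P) :
    ∫ ω, |X ω| ∂P ≤ (∫ ω, |X ω| ^ p ∂P) ^ (1 / p) := by
  have hp₀ : 0 < p := by linarith
  have hjensen : (∫ ω, |X ω| ∂P) ^ p ≤ ∫ ω, |X ω| ^ p ∂P :=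
    (convexOn_rpow hp).map_integral_le (continuousOn_id.rpow_const fun _ _ => Or.inr hp₀.le)
      isClosed_Ici (ae_of_all _ fun ω => abs_nonneg (X ω)) hX.abs hXp
  calc ∫ ω, |X ω| ∂P = ((∫ ω, |X ω| ∂P) ^ p) ^ (1 / p) := by
        rw [one_div, rpow_rpow_inv (integral_nonneg fun ω => abs_nonneg _) hp₀.ne']
    _ ≤ (∫ ω, |X ω| ^ p ∂P) ^ (1 / p) := by gcongr

lemma integral_le_integral_max_sub_div_add [IsFiniteMeasure P] (hX : Integrable X P)
    (hu : u ∈ Ico 0 1) (m : ℝ) :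
    ∫ ω, X ω ∂P ≤ ∫ ω, (max (X ω - m) 0 / (1 - u) + m) ∂P := by
  have hq : 0 < 1 - u := by linarith [hu.2]
  refine integral_mono hX
    ((((hX.sub (integrable_const m)).pos_part).div_const _).add (integrable_const m)) fun ω => ?_
  have h₁ : X ω - m ≤ max (X ω - m) 0 := le_max_left _ _
  have h₂ : max (X ω - m) 0 ≤ max (X ω - m) 0 / (1 - u) :=
    le_div_self (le_max_right _ _) hq (by linarith [hu.1])
  dsimp only
  linarith

lemma integral_le_AVaR [IsFiniteMeasure P] (hX : Integrable X P) (hu : u ∈ Ico 0 1) :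
    ∫ ω, X ω ∂P ≤ AVaR P u X :=
  le_ciInf (integral_le_integral_max_sub_div_add hX hu)

lemma AVaR_le_integral [IsFiniteMeasure P] (hX : Integrable X P) (hu : u ∈ Ico 0 1) (m : ℝ) :
    AVaR P u X ≤ ∫ ω, (max (X ω - m) 0 / (1 - u) + m) ∂P :=
  ciInf_le ⟨_, forall_mem_range.2 (integral_le_integral_max_sub_div_add hX hu)⟩ m

lemma neg_integral_abs_rpow_rpow_le_AVaR [IsProbabilityMeasure P] (hp : 1 ≤ p)
    (hX : Integrable X P) (hXp : Integrable (fun ω => |X ω| ^ p) P) (hu : u ∈ Ico 0 1) :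
    -(∫ ω, |X ω| ^ p ∂P) ^ (1 / p) ≤ AVaR P u X :=
  calc -(∫ ω, |X ω| ^ p ∂P) ^ (1 / p) ≤ -∫ ω, |X ω| ∂P :=
        neg_le_neg (integral_abs_le_integral_abs_rpow_rpow hp hX hXp)
    _ ≤ ∫ ω, X ω ∂P := neg_le_of_abs_le abs_integral_le_integral_abs
    _ ≤ AVaR P u X := integral_le_AVaR hX hu

lemma AVaR_le_of_integral_abs_rpow_le [IsProbabilityMeasure P] {B : ℝ} (hp : 1 ≤ p)
    (hX : Integrable X P) (hXp : Integrable (fun ω => |X ω| ^ p) P) (hu : u ∈ Ico 0 1)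
    (hB : 0 < B) (h : ∫ ω, |X ω| ^ p ∂P ≤ (1 - u) * B ^ p) : AVaR P u X ≤ B := by
  have hp₀ : 0 < p := by linarith
  have hq : 0 < 1 - u := by linarith [hu.2]
  set m := B * (1 - 1 / p) with hm
  have hpos : Integrable (fun ω => max (X ω - m) 0) P :=
    (hX.sub (integrable_const m)).pos_part
  have hmoment : ∫ ω, max (X ω - m) 0 ∂P ≤ B / p * (∫ ω, |X ω| ^ p ∂P) / B ^ p :=
    calc ∫ ω, max (X ω - m) 0 ∂P ≤ ∫ ω, B / p * (|X ω| ^ p / B ^ p) ∂P :=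
          integral_mono hpos ((hXp.div_const _).const_mul _) fun ω => by
            rw [← div_rpow (abs_nonneg _) hB.le]
            exact max_sub_mul_one_sub_inv_le hp hB (X ω)
      _ = B / p * (∫ ω, |X ω| ^ p ∂P) / B ^ p := by
          rw [integral_const_mul, integral_div, mul_div_assoc]
  calc AVaR P u X ≤ ∫ ω, (max (X ω - m) 0 / (1 - u) + m) ∂P := AVaR_le_integral hX hu m
    _ = (∫ ω, max (X ω - m) 0 ∂P) / (1 - u) + m := by
        rw [integral_add (hpos.div_const _) (integrable_const m), integral_div, integral_const]
        simp
    _ ≤ B / p * ((1 - u) * B ^ p) / B ^ p / (1 - u) + m := by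
        gcongr
        exact hmoment.trans (by gcongr)
    _ = B := by rw [hm]; field_simp; ring

lemma AVaR_le_integral_abs_rpow_rpow_div [IsProbabilityMeasure P] (hp : 1 ≤ p)
    (hX : Integrable X P) (hXp : Integrable (fun ω => |X ω| ^ p) P) (hu : u ∈ Ico 0 1) :
    AVaR P u X ≤ (∫ ω, |X ω| ^ p ∂P) ^ (1 / p) / (1 - u) ^ (1 / p) := by
  have hp₀ : 0 < p := by linarith
  have hq : 0 < 1 - u := by linarith [hu.2]
  have hM : 0 ≤ ∫ ω, |X ω| ^ p ∂P := integral_nonneg fun ω => by positivity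
  refine le_of_forall_gt_imp_ge_of_dense fun B hB => ?_
  have hB₀ : 0 < B := lt_of_le_of_lt (by positivity) hB
  refine AVaR_le_of_integral_abs_rpow_le hp hX hXp hu hB₀ ?_
  rw [div_lt_iff₀ (by positivity)] at hB
  calc ∫ ω, |X ω| ^ p ∂P = ((∫ ω, |X ω| ^ p ∂P) ^ (1 / p)) ^ p := by
        rw [← rpow_mul hM, one_div_mul_cancel hp₀.ne', rpow_one]
    _ ≤ (B * (1 - u) ^ (1 / p)) ^ p := by gcongr
    _ = (1 - u) * B ^ p := by
        rw [mul_rpow hB₀.le (by positivity), ← rpow_mul hq.le,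
          one_div_mul_cancel hp₀.ne', rpow_one, mul_comm]
end

/-- moment bound `|AVaR_u(X)| ≤ ‖X‖_{L^p} / (1-u)^{1/p}`. -/
theorem avar_moment_bound
    {Ω : Type*} [MeasurableSpace Ω] (P : Measure Ω) [IsProbabilityMeasure P]
    (p : ℝ) (hp : 1 < p)
    (X : Ω → ℝ) (hXint : Integrable X P)
    (hXmom : Integrable (fun ω => |X ω| ^ p) P) :
    ∀ u : ℝ, u ∈ Set.Ico (0:ℝ) 1 →
      |AVaR P u X| ≤ (∫ ω, |X ω| ^ p ∂P) ^ (1 / p) / (1 - u) ^ (1 / p) := by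
  intro u hu
  have hq : 0 < 1 - u := by linarith [hu.2]
  have hC : (∫ ω, |X ω| ^ p ∂P) ^ (1 / p) ≤ (∫ ω, |X ω| ^ p ∂P) ^ (1 / p) / (1 - u) ^ (1 / p) :=
    le_div_self (by positivity) (by positivity)
      (rpow_le_one hq.le (by linarith [hu.1]) (by positivity))
  exact abs_le.2 ⟨(neg_le_neg hC).trans (neg_integral_abs_rpow_rpow_le_AVaR hp.le hXint hXmom hu),
    AVaR_le_integral_abs_rpow_rpow_div hp.le hXint hXmom hu⟩
end

section
/- Let 0 ≤ b < a < 1. Then there exists a constant C > 0 (depending only on a and b) such that for every x ∈ [0,∞), ∑_{n≥1} 2^{−an} · ( (x·2^n) ∧ 2^{bn} ) ≤ C · ( x^{(a−b)/(1−b)} ∨ x ), where ∧ denotes minimum and ∨ denotes maximum. -/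
/-!
With `x = 2 ^ u`, the `m`-th term is `min (2 ^ (u + (1 - a) m)) (2 ^ (-(a - b) m))`, which factors as
`x ^ θ * min (2 ^ ((1 - a) (m - L))) (2 ^ (-(a - b) (m - L)))` with `θ = (a - b) / (1 - b)` and
`L = -u / (1 - b)`. The minimum is at most `2 ^ (-r |m - L|)` with `r = min (1 - a) (a - b) > 0`, and
`∑ₘ 2 ^ (-r |m - L|)` is bounded independently of `L`: moving `L` to `⌊L⌋` costs a factor `2 ^ r`,
and the shifted sum is part of the two-sided geometric series `∑_{j ∈ ℤ} 2 ^ (-r |j|)`.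
-/

open Real

namespace Real

variable {c p q r : ℝ}

theorem min_rpow_le_rpow_neg_abs (hc : 1 ≤ c) (t : ℝ) :
    min (c ^ (p * t)) (c ^ (-(q * t))) ≤ c ^ (-(min p q * |t|)) := by
  rcases le_total 0 t with ht | ht
  · refine (min_le_right _ _).trans (rpow_le_rpow_of_exponent_le hc ?_)
    rw [abs_of_nonneg ht]
    nlinarith [min_le_right p q]
  · refine (min_le_left _ _).trans (rpow_le_rpow_of_exponent_le hc ?_)
    rw [abs_of_nonpos ht]
    nlinarith [min_le_left p q]

theorem rpow_neg_abs_sub_le_floor (hc : 1 ≤ c) (hr : 0 ≤ r) (s L : ℝ) :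
    c ^ (-(r * |s - L|)) ≤ c ^ r * c ^ (-(r * |s - ⌊L⌋|)) := by
  have hL := Int.floor_le L
  have hL' := Int.lt_floor_add_one L
  have htri := abs_sub_le s L ⌊L⌋
  rw [abs_of_nonneg (sub_nonneg.2 hL)] at htri
  rw [← rpow_add (by linarith)]
  exact rpow_le_rpow_of_exponent_le hc (by nlinarith)

theorem summable_int_rpow_neg_abs (hc : 1 < c) (hr : 0 < r) :
    Summable fun j : ℤ => c ^ (-(r * |(j : ℝ)|)) := by
  have hgeom : Summable fun n : ℕ => c ^ (-(r * n)) := by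
    have hρ : c ^ (-r) < 1 := rpow_lt_one_of_one_lt_of_neg hc (neg_neg_of_pos hr)
    convert summable_geometric_of_lt_one (by positivity) hρ using 2 with n
    rw [← rpow_mul_natCast (by positivity)]
    ring_nf
  refine Summable.of_nat_of_neg ?_ ?_ <;> simpa using hgeom

theorem rpow_neg_abs_natCast_sub_le (hc : 1 ≤ c) (hr : 0 ≤ r) (L : ℝ) (n : ℕ) :
    c ^ (-(r * |n - L|)) ≤ c ^ r * c ^ (-(r * |(((n : ℤ) - ⌊L⌋ : ℤ) : ℝ)|)) := by
  push_cast
  exact rpow_neg_abs_sub_le_floor hc hr n L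

theorem natCast_sub_floor_injective (L : ℝ) : Function.Injective fun n : ℕ => (n : ℤ) - ⌊L⌋ :=
  fun _ _ h => by simpa using h

theorem summable_rpow_neg_abs_natCast_sub (hc : 1 < c) (hr : 0 < r) (L : ℝ) :
    Summable fun n : ℕ => c ^ (-(r * |n - L|)) :=
  ((summable_int_rpow_neg_abs hc hr).comp_injective (natCast_sub_floor_injective L)
    |>.mul_left (c ^ r)).of_nonneg_of_le (fun _ => by positivity)
    (rpow_neg_abs_natCast_sub_le hc.le hr.le L)

theorem tsum_rpow_neg_abs_natCast_sub_le (hc : 1 < c) (hr : 0 < r) (L : ℝ) :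
    ∑' n : ℕ, c ^ (-(r * |n - L|)) ≤ c ^ r * ∑' j : ℤ, c ^ (-(r * |(j : ℝ)|)) := by
  have hZ := summable_int_rpow_neg_abs hc hr
  have hN := hZ.comp_injective (natCast_sub_floor_injective L)
  calc ∑' n : ℕ, c ^ (-(r * |n - L|))
      ≤ ∑' n : ℕ, c ^ r * c ^ (-(r * |(((n : ℤ) - ⌊L⌋ : ℤ) : ℝ)|)) :=
        (summable_rpow_neg_abs_natCast_sub hc hr L).tsum_le_tsum
          (rpow_neg_abs_natCast_sub_le hc.le hr.le L) (hN.mul_left _)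
    _ ≤ c ^ r * ∑' j : ℤ, c ^ (-(r * |(j : ℝ)|)) := by
        rw [tsum_mul_left]
        gcongr
        exact tsum_comp_le_tsum_of_inj hZ (fun _ => by positivity) (natCast_sub_floor_injective L)

theorem rpow_add_min_eq (hc : 0 < c) (hpq : p + q ≠ 0) (u m : ℝ) :
    min (c ^ (u + p * m)) (c ^ (-(q * m))) =
      c ^ (q / (p + q) * u) *
        min (c ^ (p * (m + u / (p + q)))) (c ^ (-(q * (m + u / (p + q))))) := by
  rw [mul_min_of_nonneg _ _ (by positivity), ← rpow_add hc, ← rpow_add hc]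
  congr 2 <;> field_simp <;> ring

theorem rpow_neg_mul_mul_min_le (hc : 1 < c) {a b x : ℝ} (hb : b ≠ 1) (hx : 0 ≤ x) (m : ℝ) :
    c ^ (-(a * m)) * min (x * c ^ m) (c ^ (b * m)) ≤
      x ^ ((a - b) / (1 - b)) * c ^ (-(min (1 - a) (a - b) * |m + logb c x / (1 - b)|)) := by
  rcases hx.eq_or_lt with rfl | hx
  · simp only [zero_mul, min_eq_left (rpow_nonneg (by positivity) _), mul_zero]
    positivity
  have hc0 : 0 < c := by linarith
  obtain ⟨u, rfl⟩ : ∃ u, c ^ u = x := ⟨logb c x, rpow_logb hc0 hc.ne' hx⟩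
  have hsplit : c ^ (-(a * m)) * min (c ^ u * c ^ m) (c ^ (b * m)) =
      min (c ^ (u + (1 - a) * m)) (c ^ (-((a - b) * m))) := by
    rw [mul_min_of_nonneg _ _ (by positivity), ← rpow_add hc0, ← rpow_add hc0, ← rpow_add hc0]
    congr 2 <;> ring
  have hsum : 1 - a + (a - b) = 1 - b := by ring
  rw [hsplit, rpow_add_min_eq hc0 (by rw [hsum]; exact sub_ne_zero.2 hb.symm), hsum,
    logb_rpow hc0 hc.ne', ← rpow_mul hc0.le, mul_comm u]
  gcongr
  exact min_rpow_le_rpow_neg_abs hc.le _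

end Real

theorem geometric_sum_interpolation_bound_general
    (a b : ℝ) (hba : b < a) (ha : a < 1) :
    ∃ C > 0, ∀ x : ℝ, 0 ≤ x →
      (∑' n : ℕ, (2 : ℝ) ^ (-(a * ((n : ℝ) + 1))) *
          min (x * 2 ^ ((n : ℝ) + 1)) ((2 : ℝ) ^ (b * ((n : ℝ) + 1))))
        ≤ C * max (x ^ ((a - b) / (1 - b))) x := by
  set r := min (1 - a) (a - b)
  have hr : 0 < r := lt_min (by linarith) (by linarith)
  have hZ := summable_int_rpow_neg_abs one_lt_two hr
  refine ⟨2 ^ r * ∑' j : ℤ, (2 : ℝ) ^ (-(r * |(j : ℝ)|)),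
    mul_pos (by positivity) (hZ.tsum_pos (fun _ => by positivity) 0 (by positivity)), fun x hx => ?_⟩
  set L := -(1 + logb 2 x / (1 - b))
  have hterm (n : ℕ) : (2 : ℝ) ^ (-(a * ((n : ℝ) + 1))) *
      min (x * 2 ^ ((n : ℝ) + 1)) ((2 : ℝ) ^ (b * ((n : ℝ) + 1))) ≤
        x ^ ((a - b) / (1 - b)) * 2 ^ (-(r * |n - L|)) := by
    rw [show (n : ℝ) - L = n + 1 + logb 2 x / (1 - b) by ring]
    exact rpow_neg_mul_mul_min_le one_lt_two (hba.trans ha).ne hx _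
  have hdecay := summable_rpow_neg_abs_natCast_sub one_lt_two hr L
  calc _ ≤ ∑' n : ℕ, x ^ ((a - b) / (1 - b)) * (2 : ℝ) ^ (-(r * |n - L|)) :=
        ((hdecay.mul_left _).of_nonneg_of_le (fun _ => by positivity) hterm).tsum_le_tsum hterm
          (hdecay.mul_left _)
    _ ≤ x ^ ((a - b) / (1 - b)) * (2 ^ r * ∑' j : ℤ, (2 : ℝ) ^ (-(r * |(j : ℝ)|))) := by
        rw [tsum_mul_left]
        gcongr
        exact tsum_rpow_neg_abs_natCast_sub_le one_lt_two hr L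
    _ ≤ _ := by
        rw [mul_comm]
        gcongr
        exact le_max_left _ _

/-- the elementary summation bound
`∑_{n≥1} 2^{-an} ((x 2^n) ∧ 2^{bn}) ≤ C (x^{(a−b)/(1−b)} ∨ x)` for `0 ≤ b < a < 1`. -/
theorem geometric_sum_interpolation_bound
    (a b : ℝ) (hb : 0 ≤ b) (hba : b < a) (ha : a < 1) :
    ∃ C > 0, ∀ x : ℝ, 0 ≤ x →
      (∑' n : ℕ, (2 : ℝ) ^ (-(a * ((n : ℝ) + 1))) *
          min (x * 2 ^ ((n : ℝ) + 1)) ((2 : ℝ) ^ (b * ((n : ℝ) + 1))))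
        ≤ C * max (x ^ ((a - b) / (1 - b))) x :=
  geometric_sum_interpolation_bound_general a b hba ha
end

section
/- Let ρ : L^∞ → ℝ be any law invariant convex risk measure, let F, G_1, …, G_e : 𝒳 → ℝ be bounded measurable functions, let 𝒢 ⊆ ℝ^e be an arbitrary set, and define π^ν(F) := inf_{g∈𝒢} ρ^ν(F + g·G) ∈ [−∞,∞) for probability measures ν on 𝒳. Assume (μ, G) is non-degenerate, i.e. for every g ∈ ℝ^e \ {0} one has μ({x ∈ 𝒳 : g·G(x) < 0}) > 0. If π^μ(F) ∈ ℝ and E[ |π^μ(F) − π^{μ_N}(F)| ] → 0 as N → ∞, then the set 𝒢 is bounded. -/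
/-!
If `𝒢` is unbounded, the normalised strategies `g / ‖g‖`, `g ∈ 𝒢`, accumulate at some unit
vector `u`. Non-degeneracy gives `δ > 0` with `μ (u·G ≤ -δ) > 0`, and on the set
`A = {u·G ≤ -δ}` the payoffs `F + g·G` of strategies far out in the direction `u` are
uniformly arbitrarily negative. With probability `μ(A)^N > 0` all of `X_1, …, X_N` lie in `A`;
then every such payoff has an empirical law supported far below zero, so by monotonicity and
cash invariance `π^{μ_N}(F) = -∞`, while `π^μ(F)` is finite. Hence the expected estimation
error is `+∞` for every `N`.
-/

open MeasureTheory ProbabilityTheory Filter Real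
open scoped ENNReal NNReal

theorem exists_norm_eq_one_of_not_isBounded {E : Type*} [NormedAddCommGroup E]
    [NormedSpace ℝ E] [ProperSpace E] {S : Set E} (hS : ¬ Bornology.IsBounded S) :
    ∃ u : E, ‖u‖ = 1 ∧ ∀ ε > 0, ∀ R : ℝ, ∃ g ∈ S, R < ‖g‖ ∧ ‖‖g‖⁻¹ • g - u‖ < ε := by
  have hlarge : ∀ k : ℕ, ∃ g ∈ S, (k : ℝ) < ‖g‖ := by
    rw [isBounded_iff_forall_norm_le] at hS
    push Not at hS
    exact fun k => hS k
  choose g hgS hg using hlarge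
  have hgpos (k : ℕ) : 0 < ‖g k‖ := (Nat.cast_nonneg k).trans_lt (hg k)
  have hsphere (k : ℕ) : ‖g k‖⁻¹ • g k ∈ Metric.sphere (0 : E) 1 := by
    simp [norm_smul, (hgpos k).ne']
  obtain ⟨u, hu, φ, hφ, hlim⟩ := (isCompact_sphere (0 : E) 1).tendsto_subseq hsphere
  refine ⟨u, mem_sphere_zero_iff_norm.mp hu, fun ε hε R => ?_⟩
  obtain ⟨k, hkε, hkR⟩ := ((hlim.eventually (Metric.ball_mem_nhds u hε)).and
    (hφ.tendsto_atTop.eventually_ge_atTop ⌈R⌉₊)).exists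
  refine ⟨g (φ k), hgS _, ?_, by simpa [dist_eq_norm] using hkε⟩
  calc R ≤ ⌈R⌉₊ := Nat.le_ceil R
    _ ≤ φ k := by exact_mod_cast hkR
    _ < ‖g (φ k)‖ := hg _

theorem exists_pos_measure_setOf_le_neg_ne_zero {α : Type*} [MeasurableSpace α]
    {μ : Measure α} {f : α → ℝ} (hf : μ {x | f x < 0} ≠ 0) :
    ∃ δ > 0, μ {x | f x ≤ -δ} ≠ 0 := by
  by_contra! h
  refine hf (measure_mono_null (fun x (hx : f x < 0) => ?_)
    (measure_iUnion_null fun n : ℕ => h (1 / ((n : ℝ) + 1)) (by positivity)))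
  obtain ⟨n, hn⟩ := exists_nat_one_div_lt (neg_pos.mpr hx)
  exact Set.mem_iUnion.mpr ⟨n, show f x ≤ -(1 / ((n : ℝ) + 1)) by linarith⟩

theorem abs_sum_mul_le_norm_mul_sum {𝒳 : Type*} {e : ℕ} {Gf : Fin e → 𝒳 → ℝ}
    {C : Fin e → ℝ} (hC : ∀ i x, |Gf i x| ≤ C i) (v : Fin e → ℝ) (x : 𝒳) :
    |∑ i, v i * Gf i x| ≤ ‖v‖ * ∑ i, C i := by
  rw [Finset.mul_sum]
  refine (Finset.abs_sum_le_sum_abs _ _).trans (Finset.sum_le_sum fun i _ => ?_)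
  rw [abs_mul]
  exact mul_le_mul (by simpa using norm_le_pi_norm v i) (hC i x) (abs_nonneg _) (norm_nonneg _)

theorem exists_mem_forall_payoff_le_of_not_isBounded {𝒳 : Type*} {e : ℕ} {F : 𝒳 → ℝ}
    {Gf : Fin e → 𝒳 → ℝ} {CF : ℝ} {C : Fin e → ℝ} (hF : ∀ x, F x ≤ CF)
    (hC : ∀ i x, |Gf i x| ≤ C i) {𝒢 : Set (Fin e → ℝ)} (h𝒢 : ¬ Bornology.IsBounded 𝒢) :
    ∃ u : Fin e → ℝ, u ≠ 0 ∧ ∀ δ > 0, ∀ c : ℝ, ∃ g ∈ 𝒢,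
      ∀ x, ∑ i, u i * Gf i x ≤ -δ → payoff F Gf g x ≤ c := by
  obtain ⟨u, hu, hdir⟩ := exists_norm_eq_one_of_not_isBounded h𝒢
  refine ⟨u, by rintro rfl; simp at hu, fun δ hδ c => ?_⟩
  set K := ∑ i, C i
  set R := |2 * (CF - c) / δ|
  obtain ⟨g, hg𝒢, hgR, hgu⟩ := hdir (δ / (2 * (|K| + 1))) (by positivity) R
  refine ⟨g, hg𝒢, fun x hx => ?_⟩
  have hgpos : 0 < ‖g‖ := (abs_nonneg _).trans_lt hgR
  set v := ‖g‖⁻¹ • g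
  have hv : ∑ i, v i * Gf i x ≤ -(δ / 2) := by
    have hsplit : ∑ i, v i * Gf i x = ∑ i, u i * Gf i x + ∑ i, (v - u) i * Gf i x := by
      rw [← Finset.sum_add_distrib]
      exact Finset.sum_congr rfl fun i _ => by simp only [Pi.sub_apply]; ring
    have herr : ‖v - u‖ * K ≤ δ / 2 := by
      calc ‖v - u‖ * K ≤ ‖v - u‖ * |K| :=
            mul_le_mul_of_nonneg_left (le_abs_self K) (norm_nonneg _)
        _ ≤ δ / (2 * (|K| + 1)) * |K| := mul_le_mul_of_nonneg_right hgu.le (abs_nonneg K)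
        _ ≤ δ / 2 := by
            rw [div_mul_eq_mul_div, div_le_div_iff₀ (by positivity) (by positivity)]
            nlinarith [abs_nonneg K]
    linarith [(abs_le.mp (abs_sum_mul_le_norm_mul_sum hC (v - u) x)).2]
  have hsum : ∑ i, g i * Gf i x = ‖g‖ * ∑ i, v i * Gf i x := by
    rw [Finset.mul_sum]
    exact Finset.sum_congr rfl fun i _ => by simp only [v, Pi.smul_apply, smul_eq_mul]; field_simp
  have hR : 2 * (CF - c) ≤ ‖g‖ * δ := by
    have := (div_le_iff₀ hδ).mp ((le_abs_self _).trans hgR.le)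
    linarith
  calc payoff F Gf g x = F x + ‖g‖ * ∑ i, v i * Gf i x := by rw [payoff, hsum]
    _ ≤ CF + ‖g‖ * -(δ / 2) := add_le_add (hF x) (mul_le_mul_of_nonneg_left hv hgpos.le)
    _ ≤ c := by linarith

theorem abs_payoff_le {𝒳 : Type*} {e : ℕ} {F : 𝒳 → ℝ} {Gf : Fin e → 𝒳 → ℝ} {CF : ℝ}
    {C : Fin e → ℝ} (hF : ∀ x, |F x| ≤ CF) (hC : ∀ i x, |Gf i x| ≤ C i) (g : Fin e → ℝ)
    (x : 𝒳) : |payoff F Gf g x| ≤ CF + ‖g‖ * ∑ i, C i :=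
  (abs_add_le _ _).trans (add_le_add (hF x) (abs_sum_mul_le_norm_mul_sum hC g x))

theorem measurable_payoff {𝒳 : Type*} [MeasurableSpace 𝒳] {e : ℕ} {F : 𝒳 → ℝ}
    {Gf : Fin e → 𝒳 → ℝ} (hF : Measurable F) (hG : ∀ i, Measurable (Gf i)) (g : Fin e → ℝ) :
    Measurable (payoff F Gf g) :=
  hF.add (Finset.measurable_sum _ fun i _ => (hG i).const_mul (g i))

theorem risk_le_add_of_ae_mem_Icc {Ω' : Type*} [MeasurableSpace Ω'] (P' : Measure Ω')
    (ρ : (Ω' → ℝ) → ℝ) (ρm : Measure ℝ → ℝ)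
    (hρ_cash : ∀ Y : Ω' → ℝ, Measurable Y → (∃ C, ∀ x, |Y x| ≤ C) →
      ∀ m : ℝ, ρ (fun x => Y x + m) = ρ Y + m)
    (hρ_mono : ∀ Y Z : Ω' → ℝ, Measurable Y → Measurable Z →
      (∃ C, ∀ x, |Y x| ≤ C) → (∃ C, ∀ x, |Z x| ≤ C) →
      (∀ᵐ x ∂P', Y x ≤ Z x) → ρ Y ≤ ρ Z)
    (hρm : ∀ Y : Ω' → ℝ, Measurable Y → (∃ C, ∀ x, |Y x| ≤ C) →
      ρm (Measure.map Y P') = ρ Y)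
    (hstd : ∀ ν : Measure ℝ, IsProbabilityMeasure ν →
      ∃ Y : Ω' → ℝ, Measurable Y ∧ Measure.map Y P' = ν)
    {ν : Measure ℝ} [IsProbabilityMeasure ν] {a c : ℝ} (hν : ∀ᵐ y ∂ν, y ∈ Set.Icc a c) :
    ρm ν ≤ ρ 0 + c := by
  obtain ⟨Y, hYm, hYν⟩ := hstd ν inferInstance
  -- `Y` need not be bounded, but its clamp to `[a, c]` has the same law
  set Y' : Ω' → ℝ := fun ω => max a (min (Y ω) c)
  have hY'm : Measurable Y' := measurable_const.max (hYm.min measurable_const)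
  have hY'bdd : ∃ C, ∀ ω, |Y' ω| ≤ C := ⟨|a| + |c|, fun ω => abs_le.mpr
    ⟨by linarith [le_max_left a (min (Y ω) c), neg_abs_le a, abs_nonneg c],
     max_le (by linarith [le_abs_self a, abs_nonneg c])
      (by linarith [min_le_right (Y ω) c, le_abs_self c, abs_nonneg a])⟩⟩
  have hYIcc : ∀ᵐ ω ∂P', Y ω ∈ Set.Icc a c := ae_of_ae_map hYm.aemeasurable (hYν ▸ hν)
  have hY'Y : Y' =ᵐ[P'] Y :=
    hYIcc.mono fun ω h => by simp only [Y', min_eq_left h.2, max_eq_right h.1]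
  have hY'c : ∀ᵐ ω ∂P', Y' ω ≤ (0 : Ω' → ℝ) ω + c := by
    filter_upwards [hY'Y, hYIcc] with ω h1 h2
    simpa [h1] using h2.2
  calc ρm ν = ρ Y' := by rw [← hρm Y' hY'm hY'bdd, Measure.map_congr hY'Y, hYν]
    _ ≤ ρ (fun ω => (0 : Ω' → ℝ) ω + c) :=
        hρ_mono _ _ hY'm (measurable_zero.add_const c) hY'bdd ⟨|c|, by simp⟩ hY'c
    _ = ρ 0 + c := hρ_cash 0 measurable_const ⟨0, by simp⟩ c

theorem iInf_risk_map_eq_bot {𝒳 ι : Type*} [MeasurableSpace 𝒳] {ρm : Measure ℝ → ℝ} {r : ℝ}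
    (hρm : ∀ (ν : Measure ℝ) [IsProbabilityMeasure ν] (a c : ℝ),
      (∀ᵐ y ∂ν, y ∈ Set.Icc a c) → ρm ν ≤ r + c)
    {H : ι → 𝒳 → ℝ} (hHm : ∀ g, Measurable (H g)) (hHbdd : ∀ g, ∃ B, ∀ x, |H g x| ≤ B)
    {𝒢 : Set ι} {A : Set 𝒳} (hA : ∀ c, ∃ g ∈ 𝒢, ∀ x ∈ A, H g x ≤ c)
    {ν : Measure 𝒳} [IsProbabilityMeasure ν] (hνA : ∀ᵐ x ∂ν, x ∈ A) :
    ⨅ g ∈ 𝒢, ((ρm (ν.map (H g)) : ℝ) : EReal) = ⊥ := by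
  refine (EReal.eq_bot_iff_forall_lt _).mpr fun c => ?_
  obtain ⟨g, hg𝒢, hg⟩ := hA (c - r - 1)
  obtain ⟨B, hB⟩ := hHbdd g
  have := Measure.isProbabilityMeasure_map (μ := ν) (hHm g).aemeasurable
  have hlaw : ∀ᵐ y ∂(ν.map (H g)), y ∈ Set.Icc (-B) (c - r - 1) :=
    (ae_map_iff (hHm g).aemeasurable measurableSet_Icc).mpr
      (hνA.mono fun x hx => ⟨(abs_le.mp (hB x)).1, hg x hx⟩)
  calc _ ≤ ((ρm (ν.map (H g)) : ℝ) : EReal) := iInf₂_le g hg𝒢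
    _ < c := EReal.coe_lt_coe_iff.mpr (by linarith [hρm _ _ _ hlaw])

theorem isProbabilityMeasure_empMeas {𝒳 Ω : Type*} [MeasurableSpace 𝒳] (X : ℕ → Ω → 𝒳)
    {N : ℕ} (hN : N ≠ 0) (ω : Ω) : IsProbabilityMeasure (empMeas X N ω) :=
  ⟨by simp [empMeas, Measure.finsetSum_apply, ENNReal.inv_mul_cancel, hN]⟩

theorem ae_empMeas_mem {𝒳 Ω : Type*} [MeasurableSpace 𝒳] {X : ℕ → Ω → 𝒳} {A : Set 𝒳}
    (hA : MeasurableSet A) {N : ℕ} {ω : Ω} (hω : ∀ n < N, X n ω ∈ A) :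
    ∀ᵐ x ∂(empMeas X N ω), x ∈ A := by
  rw [ae_iff, empMeas, Measure.smul_apply, Measure.finsetSum_apply,
    Finset.sum_eq_zero fun n hn => ?_, smul_zero]
  rw [← Set.compl_def, Measure.dirac_apply' _ hA.compl]
  exact Set.indicator_of_notMem (not_not.mpr (hω n (Finset.mem_range.mp hn))) _

theorem ProbabilityTheory.iIndepFun.measure_biInter_preimage_eq_pow {Ω 𝒳 ι : Type*}
    [MeasurableSpace Ω] [MeasurableSpace 𝒳] {P : Measure Ω} {μ : Measure 𝒳} {X : ι → Ω → 𝒳}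
    (hX : iIndepFun X P) (hXm : ∀ n, Measurable (X n)) (hXlaw : ∀ n, P.map (X n) = μ)
    {A : Set 𝒳} (hA : MeasurableSet A) (S : Finset ι) :
    P (⋂ n ∈ S, X n ⁻¹' A) = μ A ^ S.card := by
  rw [hX.meas_biInter fun n _ => ⟨A, hA, rfl⟩]
  simp [← Measure.map_apply (hXm _) hA, hXlaw]

theorem lintegral_eq_top_of_forall_mem_eq_top {α : Type*} [MeasurableSpace α] {μ : Measure α}
    {f : α → ℝ≥0∞} {s : Set α} (hs : MeasurableSet s) (hμs : μ s ≠ 0)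
    (hf : ∀ x ∈ s, f x = ∞) : ∫⁻ x, f x ∂μ = ∞ := by
  refine top_unique ?_
  calc ∞ = ∫⁻ _ in s, ∞ ∂μ := by rw [setLIntegral_const, ENNReal.top_mul hμs]
    _ = ∫⁻ x in s, f x ∂μ := setLIntegral_congr_fun hs fun x hx => (hf x hx).symm
    _ ≤ ∫⁻ x, f x ∂μ := setLIntegral_le_lintegral s f

theorem admissible_strategies_must_be_bounded_general
    {𝒳 Ω Ω' : Type*} [MeasurableSpace 𝒳] [MeasurableSpace Ω] [MeasurableSpace Ω']
    (P : Measure Ω)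
    (μ : Measure 𝒳)
    (P' : Measure Ω')
    (X : ℕ → Ω → 𝒳)
    (hXmeas : ∀ n, Measurable (X n))
    (hXlaw : ∀ n, Measure.map (X n) P = μ)
    (hXindep : iIndepFun X P)
    {e : ℕ} (F : 𝒳 → ℝ) (Gf : Fin e → 𝒳 → ℝ)
    (hFmeas : Measurable F) (hFbdd : ∃ C, ∀ x, |F x| ≤ C)
    (hGmeas : ∀ i, Measurable (Gf i)) (hGbdd : ∀ i, ∃ C, ∀ x, |Gf i x| ≤ C)
    (𝒢 : Set (Fin e → ℝ))
    (ρ : (Ω' → ℝ) → ℝ) (ρm : Measure ℝ → ℝ)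
    -- ρ is a law invariant convex risk measure on L^∞(Ω', P'):
    (hρ_cash : ∀ Y : Ω' → ℝ, Measurable Y → (∃ C, ∀ x, |Y x| ≤ C) →
      ∀ m : ℝ, ρ (fun x => Y x + m) = ρ Y + m)
    (hρ_mono : ∀ Y Z : Ω' → ℝ, Measurable Y → Measurable Z →
      (∃ C, ∀ x, |Y x| ≤ C) → (∃ C, ∀ x, |Z x| ≤ C) →
      (∀ᵐ x ∂P', Y x ≤ Z x) → ρ Y ≤ ρ Z)
    -- ρm is the factorization of ρ through laws:
    (hρm : ∀ Y : Ω' → ℝ, Measurable Y → (∃ C, ∀ x, |Y x| ≤ C) →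
      ρm (Measure.map Y P') = ρ Y)
    -- (Ω', P') is atomless standard: every law on ℝ is realized:
    (hstd : ∀ ν : Measure ℝ, IsProbabilityMeasure ν →
      ∃ Y : Ω' → ℝ, Measurable Y ∧ Measure.map Y P' = ν)
    -- (μ, G) is non-degenerate:
    (hnondeg : ∀ g : Fin e → ℝ, g ≠ 0 → μ {x | (∑ i, g i * Gf i x) < 0} ≠ 0)
    -- π^μ(F) is a real number:
    (hπreal : ∃ r : ℝ,
      (⨅ g ∈ 𝒢, ((ρm (Measure.map (payoff F Gf g) μ) : ℝ) : EReal)) = (r : EReal))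
    -- the estimation error converges to 0 in expectation:
    (hconv : Tendsto
      (fun N : ℕ => ∫⁻ ω,
        ((⨅ g ∈ 𝒢, ((ρm (Measure.map (payoff F Gf g) μ) : ℝ) : EReal)) -
          (⨅ g ∈ 𝒢,
            ((ρm (Measure.map (payoff F Gf g) (empMeas X N ω)) : ℝ) : EReal))).abs ∂P)
      atTop (nhds 0)) :
    Bornology.IsBounded 𝒢 := by
  by_contra h𝒢
  obtain ⟨CF, hCF⟩ := hFbdd
  choose C hC using hGbdd
  obtain ⟨u, hu0, hu⟩ :=
    exists_mem_forall_payoff_le_of_not_isBounded (fun x => (abs_le.mp (hCF x)).2) hC h𝒢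
  obtain ⟨δ, hδ, hμA⟩ := exists_pos_measure_setOf_le_neg_ne_zero (hnondeg u hu0)
  set A := {x | ∑ i, u i * Gf i x ≤ -δ}
  have hAm : MeasurableSet A :=
    measurableSet_le (Finset.measurable_sum _ fun i _ => (hGmeas i).const_mul (u i))
      measurable_const
  obtain ⟨r, hr⟩ := hπreal
  obtain ⟨N, hN, hN0⟩ :=
    ((hconv.eventually_lt_const zero_lt_one).and (eventually_ne_atTop 0)).exists
  set E := ⋂ n ∈ Finset.range N, X n ⁻¹' A
  have hPE : P E ≠ 0 := by
    rw [hXindep.measure_biInter_preimage_eq_pow hXmeas hXlaw hAm]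
    exact pow_ne_zero _ hμA
  refine hN.not_ge (le_top.trans_eq (lintegral_eq_top_of_forall_mem_eq_top
    (Finset.measurableSet_biInter _ fun n _ => hXmeas n hAm) hPE fun ω hω => ?_).symm)
  have := isProbabilityMeasure_empMeas X hN0 ω
  have hωA : ∀ n < N, X n ω ∈ A := fun n hn => Set.mem_iInter₂.mp hω n (Finset.mem_range.mpr hn)
  rw [hr, iInf_risk_map_eq_bot
      (fun ν _ a c => risk_le_add_of_ae_mem_Icc P' ρ ρm hρ_cash hρ_mono hρm hstd)
      (measurable_payoff hFmeas hGmeas) (fun g => ⟨_, abs_payoff_le hCF hC g⟩)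
      (hu δ hδ) (ae_empMeas_mem hAm hωA), EReal.coe_sub_bot, EReal.abs_top]

/-- if the (possibly `-∞`-valued) hedged risk
`π^ν(F) = inf_{g∈𝒢} ρ^ν(F + g·G)` is finite under `μ` and the empirical estimation
error converges to `0` in expectation, then the set of admissible strategies `𝒢`
must be bounded.  Here `(μ, G)` is non-degenerate: `μ(g·G < 0) > 0` for `g ≠ 0`. -/
theorem admissible_strategies_must_be_bounded
    {𝒳 Ω Ω' : Type*} [MeasurableSpace 𝒳] [MeasurableSpace Ω] [MeasurableSpace Ω']
    (P : Measure Ω) [IsProbabilityMeasure P]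
    (μ : Measure 𝒳) [IsProbabilityMeasure μ]
    (P' : Measure Ω') [IsProbabilityMeasure P']
    (X : ℕ → Ω → 𝒳)
    (hXmeas : ∀ n, Measurable (X n))
    (hXlaw : ∀ n, Measure.map (X n) P = μ)
    (hXindep : iIndepFun X P)
    {e : ℕ} (F : 𝒳 → ℝ) (Gf : Fin e → 𝒳 → ℝ)
    (hFmeas : Measurable F) (hFbdd : ∃ C, ∀ x, |F x| ≤ C)
    (hGmeas : ∀ i, Measurable (Gf i)) (hGbdd : ∀ i, ∃ C, ∀ x, |Gf i x| ≤ C)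
    (𝒢 : Set (Fin e → ℝ))
    (ρ : (Ω' → ℝ) → ℝ) (ρm : Measure ℝ → ℝ)
    -- ρ is a law invariant convex risk measure on L^∞(Ω', P'):
    (hρ_cash : ∀ Y : Ω' → ℝ, Measurable Y → (∃ C, ∀ x, |Y x| ≤ C) →
      ∀ m : ℝ, ρ (fun x => Y x + m) = ρ Y + m)
    (hρ_zero : ρ (fun _ => 0) = 0)
    (hρ_mono : ∀ Y Z : Ω' → ℝ, Measurable Y → Measurable Z →
      (∃ C, ∀ x, |Y x| ≤ C) → (∃ C, ∀ x, |Z x| ≤ C) →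
      (∀ᵐ x ∂P', Y x ≤ Z x) → ρ Y ≤ ρ Z)
    (hρ_convex : ∀ Y Z : Ω' → ℝ, Measurable Y → Measurable Z →
      (∃ C, ∀ x, |Y x| ≤ C) → (∃ C, ∀ x, |Z x| ≤ C) →
      ∀ t : ℝ, t ∈ Set.Icc (0:ℝ) 1 →
        ρ (fun x => t * Y x + (1 - t) * Z x) ≤ t * ρ Y + (1 - t) * ρ Z)
    (hρ_law : ∀ Y Z : Ω' → ℝ, Measurable Y → Measurable Z →
      (∃ C, ∀ x, |Y x| ≤ C) → (∃ C, ∀ x, |Z x| ≤ C) →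
      Measure.map Y P' = Measure.map Z P' → ρ Y = ρ Z)
    -- ρm is the factorization of ρ through laws:
    (hρm : ∀ Y : Ω' → ℝ, Measurable Y → (∃ C, ∀ x, |Y x| ≤ C) →
      ρm (Measure.map Y P') = ρ Y)
    -- (Ω', P') is atomless standard: every law on ℝ is realized:
    (hstd : ∀ ν : Measure ℝ, IsProbabilityMeasure ν →
      ∃ Y : Ω' → ℝ, Measurable Y ∧ Measure.map Y P' = ν)
    -- (μ, G) is non-degenerate:
    (hnondeg : ∀ g : Fin e → ℝ, g ≠ 0 → μ {x | (∑ i, g i * Gf i x) < 0} ≠ 0)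
    -- π^μ(F) is a real number:
    (hπreal : ∃ r : ℝ,
      (⨅ g ∈ 𝒢, ((ρm (Measure.map (payoff F Gf g) μ) : ℝ) : EReal)) = (r : EReal))
    -- the estimation error converges to 0 in expectation:
    (hconv : Tendsto
      (fun N : ℕ => ∫⁻ ω,
        ((⨅ g ∈ 𝒢, ((ρm (Measure.map (payoff F Gf g) μ) : ℝ) : EReal)) -
          (⨅ g ∈ 𝒢,
            ((ρm (Measure.map (payoff F Gf g) (empMeas X N ω)) : ℝ) : EReal))).abs ∂P)
      atTop (nhds 0)) :
    Bornology.IsBounded 𝒢 :=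
  admissible_strategies_must_be_bounded_general P μ P' X hXmeas hXlaw hXindep F Gf hFmeas hFbdd
    hGmeas hGbdd 𝒢 ρ ρm hρ_cash hρ_mono hρm hstd hnondeg hπreal hconv
end
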